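/- arXiv:2309.12915 — 7 statements merged into one kernel-verified Lean document; each statement's English description precedes it below -/
import Mathlib

section
/- Let G be a group, L ≥ 1, let π be a representation of G on ℓ¹ = ℓ¹ℕ uniformly bounded by L, and let α be a cocycle for π. Then there exist a constant L' ≥ 1, a representation π' of G on L¹([0,1]) uniformly bounded by L', and a cocycle α' for π' such that ‖α'(g)‖ = ‖α(g)‖ for every g ∈ G. In particular, if G admits an affine uniformly Lipschitz action on ℓ¹ with unbounded orbits, then G admits an affine uniformly Lipschitz action on L¹([0,1]) with unbounded orbits, and any lower bound of the form ‖α(g)‖ ≥ ρ(|g|)/C − C transfers to the action on L¹([0,1]). -/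
/-!
`ℓ¹` is a contractive retract of `L¹([0,1])`: sending the `n`-th unit vector to the normalized
indicator of the `n`-th of a sequence of disjoint intervals is an isometric embedding `J`, and
integrating over those intervals is a left inverse `P` of norm at most one. A representation `π` on
`ℓ¹` then extends to `L¹([0,1])` by `π' g = J ∘ π g ∘ P + (1 - J ∘ P)`, which is `π` transported
by `J` on `range J` and the identity on `ker P`, with `‖π' g‖ ≤ ‖π g‖ + 2`. Hence `J ∘ α` is a
cocycle for `π'` with the same norms as `α`.
-/

open MeasureTheory

/-- `ℓ¹ = ℓ¹ℕ`, the Banach space of absolutely summable real sequences. -/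
noncomputable abbrev ellOne : Type := lp (fun _ : ℕ => ℝ) 1

/-- `L¹([0,1])`, the Lebesgue space of integrable real functions on `[0,1]`. -/
noncomputable abbrev LOneUnitInterval : Type :=
  Lp ℝ 1 (volume.restrict (Set.Icc (0 : ℝ) 1))

open Function Set
open scoped ENNReal

section LpOne

variable {ι : Type*}

theorem lp_one_norm_eq_tsum_norm {E : ι → Type*} [∀ i, NormedAddCommGroup (E i)] (f : lp E 1) :
    ‖f‖ = ∑' i, ‖f i‖ := by
  simpa using lp.norm_eq_tsum_rpow (p := 1) (by norm_num) f

theorem lp_one_summable_norm {E : ι → Type*} [∀ i, NormedAddCommGroup (E i)] (f : lp E 1) :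
    Summable fun i => ‖f i‖ := by
  simpa using (memℓp_gen_iff (p := 1) (by norm_num)).1 (lp.memℓp f)

variable {𝕜 F : Type*} [NontriviallyNormedField 𝕜] [NormedAddCommGroup F] [NormedSpace 𝕜 F]

section SeriesMap

theorem norm_smul_le_of_norm_le_one (c : 𝕜) {x : F} (hx : ‖x‖ ≤ 1) : ‖c • x‖ ≤ ‖c‖ := by
  rw [norm_smul]
  exact mul_le_of_le_one_right (norm_nonneg _) hx

theorem summable_norm_smul_of_norm_le_one {e : ι → F} (he : ∀ i, ‖e i‖ ≤ 1)
    (f : lp (fun _ : ι => 𝕜) 1) : Summable fun i => ‖f i • e i‖ :=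
  (lp_one_summable_norm f).of_nonneg_of_le (fun _ => norm_nonneg _) fun i =>
    norm_smul_le_of_norm_le_one _ (he i)

variable [CompleteSpace F] {e : ι → F}

variable (𝕜 e) in
noncomputable def lpOneSeriesCLM (he : ∀ i, ‖e i‖ ≤ 1) : lp (fun _ : ι => 𝕜) 1 →L[𝕜] F :=
  LinearMap.mkContinuous
    { toFun := fun f => ∑' i, f i • e i
      map_add' := fun f₁ f₂ => by
        simp only [lp.coeFn_add, Pi.add_apply, add_smul]
        exact (summable_norm_smul_of_norm_le_one he f₁).of_norm.tsum_add
          (summable_norm_smul_of_norm_le_one he f₂).of_norm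
      map_smul' := fun c f => by
        simp only [lp.coeFn_smul, Pi.smul_apply, smul_eq_mul, mul_smul, RingHom.id_apply]
        exact (summable_norm_smul_of_norm_le_one he f).of_norm.tsum_const_smul c }
    1 fun f => by
      rw [one_mul, lp_one_norm_eq_tsum_norm]
      refine (norm_tsum_le_tsum_norm (summable_norm_smul_of_norm_le_one he f)).trans ?_
      exact (summable_norm_smul_of_norm_le_one he f).tsum_le_tsum
        (fun i => norm_smul_le_of_norm_le_one _ (he i)) (lp_one_summable_norm f)

theorem lpOneSeriesCLM_apply (he : ∀ i, ‖e i‖ ≤ 1) (f : lp (fun _ : ι => 𝕜) 1) :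
    lpOneSeriesCLM 𝕜 e he f = ∑' i, f i • e i :=
  rfl

theorem norm_lpOneSeriesCLM_le (he : ∀ i, ‖e i‖ ≤ 1) : ‖lpOneSeriesCLM 𝕜 e he‖ ≤ 1 :=
  LinearMap.mkContinuous_norm_le _ zero_le_one _

end SeriesMap

section CoordinateMap

variable {φ : ι → F →L[𝕜] 𝕜} (hφ : ∀ y, Summable fun i => ‖φ i y‖)
  (hφle : ∀ y, ∑' i, ‖φ i y‖ ≤ ‖y‖)

variable (φ) in
noncomputable def lpOneCoordCLM : F →L[𝕜] lp (fun _ : ι => 𝕜) 1 :=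
  LinearMap.mkContinuous
    { toFun := fun y => ⟨fun i => φ i y, memℓp_gen (by simpa using hφ y)⟩
      map_add' := fun y z => lp.ext <| funext fun i => map_add (φ i) y z
      map_smul' := fun c y => lp.ext <| funext fun i => map_smul (φ i) c y }
    1 fun y => by simpa [lp_one_norm_eq_tsum_norm] using hφle y

theorem lpOneCoordCLM_apply (y : F) (i : ι) : lpOneCoordCLM φ hφ hφle y i = φ i y :=
  rfl

theorem norm_lpOneCoordCLM_le : ‖lpOneCoordCLM φ hφ hφle‖ ≤ 1 :=
  LinearMap.mkContinuous_norm_le _ zero_le_one _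

theorem leftInverse_lpOneCoordCLM_lpOneSeriesCLM [CompleteSpace F] {e : ι → F}
    (he : ∀ i, ‖e i‖ ≤ 1) (hdiag : ∀ i, φ i (e i) = 1) (hoff : ∀ i j, i ≠ j → φ i (e j) = 0) :
    LeftInverse (lpOneCoordCLM φ hφ hφle) (lpOneSeriesCLM 𝕜 e he) := fun f => by
  refine lp.ext <| funext fun i => ?_
  rw [lpOneCoordCLM_apply, lpOneSeriesCLM_apply,
    (φ i).map_tsum (summable_norm_smul_of_norm_le_one he f).of_norm,
    tsum_eq_single i fun j hj => by rw [map_smul, hoff i j (Ne.symm hj), smul_zero],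
    map_smul, hdiag, smul_eq_mul, mul_one]

end CoordinateMap

end LpOne

section Extension

variable {𝕜 E F : Type*} [NontriviallyNormedField 𝕜] [NormedAddCommGroup E] [NormedSpace 𝕜 E]
  [NormedAddCommGroup F] [NormedSpace 𝕜 F] (J : E →L[𝕜] F) (P : F →L[𝕜] E)

noncomputable def extendAlong (T : E →L[𝕜] E) : F →L[𝕜] F :=
  J ∘L T ∘L P + (1 - J ∘L P)

theorem extendAlong_one : extendAlong J P 1 = 1 := by
  ext y
  simp [extendAlong]

variable {J P}

theorem extendAlong_comp (hPJ : LeftInverse P J) (S T : E →L[𝕜] E) :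
    extendAlong J P (S ∘L T) = extendAlong J P S ∘L extendAlong J P T := by
  ext y
  simp only [extendAlong, add_apply, sub_apply, ContinuousLinearMap.comp_apply,
    one_apply_eq_self, map_add, map_sub, hPJ _]
  abel

theorem extendAlong_apply_map (hPJ : LeftInverse P J) (T : E →L[𝕜] E) (x : E) :
    extendAlong J P T (J x) = J (T x) := by
  simp [extendAlong, hPJ x]

theorem norm_extendAlong_le (hJ : ‖J‖ ≤ 1) (hP : ‖P‖ ≤ 1) (T : E →L[𝕜] E) :
    ‖extendAlong J P T‖ ≤ ‖T‖ + 2 := by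
  have hJP : ‖J ∘L P‖ ≤ 1 :=
    (J.opNorm_comp_le P).trans (mul_le_one₀ hJ (norm_nonneg _) hP)
  calc ‖extendAlong J P T‖ ≤ ‖J ∘L T ∘L P‖ + (‖(1 : F →L[𝕜] F)‖ + ‖J ∘L P‖) :=
        (norm_add_le _ _).trans (by gcongr; exact norm_sub_le _ _)
    _ ≤ ‖J‖ * (‖T‖ * ‖P‖) + (1 + 1) := by
        gcongr
        · exact (J.opNorm_comp_le _).trans (by gcongr; exact T.opNorm_comp_le P)
        · exact ContinuousLinearMap.norm_id_le
    _ ≤ ‖T‖ + 2 := by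
        have : ‖T‖ * ‖P‖ ≤ ‖T‖ := mul_le_of_le_one_right (norm_nonneg _) hP
        nlinarith [norm_nonneg T, norm_nonneg P, norm_nonneg J]

theorem norm_map_eq_of_leftInverse (hJ : ‖J‖ ≤ 1) (hP : ‖P‖ ≤ 1)
    (hPJ : LeftInverse P J) (x : E) : ‖J x‖ = ‖x‖ := by
  refine le_antisymm (J.le_of_opNorm_le hJ x |>.trans_eq (one_mul _)) ?_
  calc ‖x‖ = ‖P (J x)‖ := by rw [hPJ x]
    _ ≤ ‖J x‖ := P.le_of_opNorm_le hP _ |>.trans_eq (one_mul _)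

end Extension

section LOne

variable {α : Type*} [MeasurableSpace α] {μ : Measure α}

variable (μ) in
noncomputable def setIntegralCLM (s : Set α) : Lp ℝ 1 μ →L[ℝ] ℝ :=
  L1.integralCLM.comp (LpToLpRestrictCLM α ℝ ℝ μ 1 s)

theorem setIntegralCLM_apply (s : Set α) (f : Lp ℝ 1 μ) :
    setIntegralCLM μ s f = ∫ x in s, f x ∂μ := by
  rw [setIntegralCLM, ContinuousLinearMap.comp_apply, ← L1.integral_eq, L1.integral_eq_integral]
  exact integral_congr_ae (LpToLpRestrictCLM_coeFn ℝ s f)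

theorem norm_setIntegralCLM_le (t : Set α) (f : Lp ℝ 1 μ) :
    ‖setIntegralCLM μ t f‖ ≤ ∫ x in t, ‖f x‖ ∂μ := by
  rw [setIntegralCLM_apply]
  exact norm_integral_le_integral_norm _

section NormalizedIndicator

variable {t : Set α} (ht : MeasurableSet t) (hμt : μ t ≠ ∞)

noncomputable def normalizedIndicatorLp : Lp ℝ 1 μ :=
  indicatorConstLp 1 ht hμt (μ.real t)⁻¹

theorem norm_normalizedIndicatorLp_le : ‖normalizedIndicatorLp ht hμt‖ ≤ 1 := by
  rw [normalizedIndicatorLp, norm_indicatorConstLp one_ne_zero ENNReal.one_ne_top]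
  simpa [abs_of_nonneg measureReal_nonneg] using inv_mul_le_one_of_le₀ le_rfl measureReal_nonneg

theorem setIntegralCLM_normalizedIndicatorLp_self (hμt₀ : μ t ≠ 0) :
    setIntegralCLM μ t (normalizedIndicatorLp ht hμt) = 1 := by
  rw [setIntegralCLM_apply, normalizedIndicatorLp, setIntegral_indicatorConstLp ht,
    inter_self, smul_eq_mul]
  exact mul_inv_cancel₀ (ENNReal.toReal_ne_zero.2 ⟨hμt₀, hμt⟩)

theorem setIntegralCLM_normalizedIndicatorLp_of_disjoint {u : Set α} (hu : MeasurableSet u)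
    (htu : Disjoint t u) : setIntegralCLM μ u (normalizedIndicatorLp ht hμt) = 0 := by
  rw [setIntegralCLM_apply, normalizedIndicatorLp, setIntegral_indicatorConstLp hu,
    htu.inter_eq]
  simp

end NormalizedIndicator

section Disjoint

variable {ι : Type*} [Countable ι] {s : ι → Set α}

theorem hasSum_setIntegral_norm (hs : ∀ i, MeasurableSet (s i))
    (hd : Pairwise (Disjoint on s)) (f : Lp ℝ 1 μ) :
    HasSum (fun i => ∫ x in s i, ‖f x‖ ∂μ) (∫ x in ⋃ i, s i, ‖f x‖ ∂μ) :=
  hasSum_integral_iUnion hs hd (L1.integrable_coeFn f).norm.integrableOn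

theorem summable_norm_setIntegralCLM (hs : ∀ i, MeasurableSet (s i))
    (hd : Pairwise (Disjoint on s)) (f : Lp ℝ 1 μ) :
    Summable fun i => ‖setIntegralCLM μ (s i) f‖ :=
  (hasSum_setIntegral_norm hs hd f).summable.of_nonneg_of_le (fun _ => norm_nonneg _)
    fun i => norm_setIntegralCLM_le (s i) f

theorem tsum_norm_setIntegralCLM_le (hs : ∀ i, MeasurableSet (s i))
    (hd : Pairwise (Disjoint on s)) (f : Lp ℝ 1 μ) :
    ∑' i, ‖setIntegralCLM μ (s i) f‖ ≤ ‖f‖ :=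
  calc ∑' i, ‖setIntegralCLM μ (s i) f‖ ≤ ∑' i, ∫ x in s i, ‖f x‖ ∂μ :=
        (summable_norm_setIntegralCLM hs hd f).tsum_le_tsum
          (fun i => norm_setIntegralCLM_le (s i) f) (hasSum_setIntegral_norm hs hd f).summable
    _ = ∫ x in ⋃ i, s i, ‖f x‖ ∂μ := (hasSum_setIntegral_norm hs hd f).tsum_eq
    _ ≤ ∫ x, ‖f x‖ ∂μ :=
        setIntegral_le_integral (L1.integrable_coeFn f).norm (.of_forall fun _ => norm_nonneg _)
    _ = ‖f‖ := (L1.norm_eq_integral_norm f).symm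

theorem exists_contractive_retraction_lpOne_L1 (hs : ∀ i, MeasurableSet (s i))
    (hd : Pairwise (Disjoint on s)) (hμs₀ : ∀ i, μ (s i) ≠ 0)
    (hμs : ∀ i, μ (s i) ≠ ∞) :
    ∃ (J : lp (fun _ : ι => ℝ) 1 →L[ℝ] Lp ℝ 1 μ) (P : Lp ℝ 1 μ →L[ℝ] lp (fun _ : ι => ℝ) 1),
      ‖J‖ ≤ 1 ∧ ‖P‖ ≤ 1 ∧ LeftInverse P J := by
  have he : ∀ i, ‖normalizedIndicatorLp (hs i) (hμs i)‖ ≤ 1 := fun i =>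
    norm_normalizedIndicatorLp_le (hs i) (hμs i)
  refine ⟨lpOneSeriesCLM ℝ _ he, lpOneCoordCLM _ (summable_norm_setIntegralCLM hs hd)
    (tsum_norm_setIntegralCLM_le hs hd), norm_lpOneSeriesCLM_le he, norm_lpOneCoordCLM_le _ _,
    leftInverse_lpOneCoordCLM_lpOneSeriesCLM _ _ he
      (fun i => setIntegralCLM_normalizedIndicatorLp_self (hs i) (hμs i) (hμs₀ i))
      (fun i j hij => setIntegralCLM_normalizedIndicatorLp_of_disjoint (hs j) (hμs j) (hs i)
        (hd hij.symm))⟩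

end Disjoint

end LOne

theorem exists_contractive_retraction_ellOne_LOneUnitInterval :
    ∃ (J : ellOne →L[ℝ] LOneUnitInterval) (P : LOneUnitInterval →L[ℝ] ellOne),
      ‖J‖ ≤ 1 ∧ ‖P‖ ≤ 1 ∧ LeftInverse P J := by
  set a : ℕ → ℝ := fun n => 1 - 2⁻¹ ^ n with ha_def
  have ha : StrictMono a := fun m n hmn => by
    simpa [ha_def] using
      pow_lt_pow_right_of_lt_one₀ (by norm_num : (0 : ℝ) < 2⁻¹) (by norm_num) hmn
  have ha_mem : ∀ n, a n ∈ Icc (0 : ℝ) 1 := fun n => by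
    simp only [ha_def, mem_Icc, sub_nonneg, sub_le_self_iff]
    exact ⟨pow_le_one₀ (by norm_num) (by norm_num), by positivity⟩
  refine exists_contractive_retraction_lpOne_L1 (s := fun n => Ico (a n) (a (n + 1)))
    (fun _ => measurableSet_Ico) ha.monotone.pairwise_disjoint_on_Ico_succ (fun n => ?_)
    (fun _ => measure_ne_top _ _)
  have hsub : Ico (a n) (a (n + 1)) ⊆ Icc 0 1 :=
    Ico_subset_Icc_self.trans (Icc_subset_Icc (ha_mem n).1 (ha_mem (n + 1)).2)
  rw [Measure.restrict_apply measurableSet_Ico, inter_eq_left.2 hsub, Real.volume_Ico]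
  exact (ENNReal.ofReal_pos.2 (sub_pos.2 (ha n.lt_succ_self))).ne'

theorem ell1_action_transfers_to_L1_general (G : Type*) [Group G] (L : ℝ)
    (π : G → ellOne →L[ℝ] ellOne) (hπ1 : π 1 = 1)
    (hπmul : ∀ g h : G, π (g * h) = π g ∘L π h)
    (hπbdd : ∀ g : G, ‖π g‖ ≤ L)
    (α : G → ellOne) (hα : ∀ g h : G, α (g * h) = α g + π g (α h)) :
    ∃ L' : ℝ, 1 ≤ L' ∧
      ∃ π' : G → LOneUnitInterval →L[ℝ] LOneUnitInterval,
        π' 1 = 1 ∧ (∀ g h : G, π' (g * h) = π' g ∘L π' h) ∧ (∀ g : G, ‖π' g‖ ≤ L') ∧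
          ∃ α' : G → LOneUnitInterval,
            (∀ g h : G, α' (g * h) = α' g + π' g (α' h)) ∧
            (∀ g : G, ‖α' g‖ = ‖α g‖) := by
  obtain ⟨J, P, hJ, hP, hPJ⟩ := exists_contractive_retraction_ellOne_LOneUnitInterval
  have hL₀ : 0 ≤ L := (norm_nonneg _).trans (hπbdd 1)
  refine ⟨L + 2, by linarith, fun g => extendAlong J P (π g), by simp only [hπ1, extendAlong_one],
    fun g h => by simp only [hπmul, extendAlong_comp hPJ],
    fun g => by linarith [norm_extendAlong_le hJ hP (π g), hπbdd g],
    fun g => J (α g), fun g h => by simp only [hα, map_add, extendAlong_apply_map hPJ],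
    fun g => norm_map_eq_of_leftInverse hJ hP hPJ (α g)⟩

/-- If a group `G` has a representation `π` on `ℓ¹`, uniformly bounded by `L ≥ 1`, with a
cocycle `α`, then there are `L' ≥ 1`, a representation `π'` of `G` on `L¹([0,1])` uniformly
bounded by `L'`, and a cocycle `α'` for `π'` with `‖α' g‖ = ‖α g‖` for all `g`. -/
theorem ell1_action_transfers_to_L1 (G : Type*) [Group G] (L : ℝ) (hL : 1 ≤ L)
    (π : G → ellOne →L[ℝ] ellOne) (hπ1 : π 1 = 1)
    (hπmul : ∀ g h : G, π (g * h) = π g ∘L π h)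
    (hπbdd : ∀ g : G, ‖π g‖ ≤ L)
    (α : G → ellOne) (hα : ∀ g h : G, α (g * h) = α g + π g (α h)) :
    ∃ L' : ℝ, 1 ≤ L' ∧
      ∃ π' : G → LOneUnitInterval →L[ℝ] LOneUnitInterval,
        π' 1 = 1 ∧ (∀ g h : G, π' (g * h) = π' g ∘L π' h) ∧ (∀ g : G, ‖π' g‖ ≤ L') ∧
          ∃ α' : G → LOneUnitInterval,
            (∀ g h : G, α' (g * h) = α' g + π' g (α' h)) ∧
            (∀ g : G, ‖α' g‖ = ‖α g‖) :=
  ell1_action_transfers_to_L1_general G L π hπ1 hπmul hπbdd α hα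
end

section
/- Let H be a subgroup of a group G, E a real vector space, π : G → End(E) a multiplicative map with π(1) = id, and β : G → E a cocycle for π (i.e. β(gh) = β(g) + π(g)β(h) for all g,h ∈ G) such that β(gh) = β(g) for all g ∈ G, h ∈ H, so that β induces a well-defined map on the coset space G/H. Assume the family {β(g) : gH ∈ G/H, gH ≠ H} is linearly independent in E. Let E' = span{β(g) : g ∈ G}, and let α : G → E be any map with α(1) = 0 and α(gh) = α(g) for all g ∈ G, h ∈ H. Then E' is invariant under every π(g), and there exists a unique family of linear maps D(g) : E' → E, g ∈ G, such that D(g)(β(g')) = α(gg') − α(g) − π(g)α(g') for all g' ∈ G; moreover this family satisfies the Leibniz rule D(gh) = D(g) ∘ (π(h) restricted to E') + π(g) ∘ D(h) as linear maps E' → E, for all g,h ∈ G. -/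
/-!
The cocycle identity gives `π g (β g') = β (g * g') - β g`, so the span of `β` is `π`-invariant.
Since `β 1 = 0` and `β` is constant on cosets, the vectors `β g` with `gH ≠ H` form a basis of
this span; hence `D g` is uniquely determined by prescribing `D g (β g')`, which is legitimate
because the prescribed value depends only on `g'H` and vanishes at `H` (as `α 1 = 0`).
The Leibniz rule only has to be checked on the vectors `β g'`, where it becomes an identity
between values of `cocycleDefect π α g g' = α (g * g') - α g - π g (α g')`.
-/

open Submodule Set

theorem apply_eq_of_leftRel {G α : Type*} [Group G] {H : Subgroup G} {f : G → α}
    (hf : ∀ g h : G, h ∈ H → f (g * h) = f g) {a b : G} (hab : QuotientGroup.leftRel H a b) :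
    f a = f b := by
  simpa using (hf a (a⁻¹ * b) (QuotientGroup.leftRel_apply.mp hab)).symm

section Span

variable {R M N : Type*} [AddCommMonoid M] [AddCommMonoid N]

theorem LinearMap.ext_on_span_range [Semiring R] [Module R M] [Module R N] {ι : Type*}
    {v : ι → M} {f₁ f₂ : Submodule.span R (Set.range v) →ₗ[R] N}
    (h : ∀ i, f₁ ⟨v i, subset_span ⟨i, rfl⟩⟩ = f₂ ⟨v i, subset_span ⟨i, rfl⟩⟩) : f₁ = f₂ :=
  LinearMap.ext_on span_span_coe_preimage <| by
    rintro ⟨_, _⟩ ⟨i, rfl⟩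
    exact h i

variable [CommSemiring R] [Module R M] [Module R N]

theorem exists_linearMap_span_range_of_linearIndependent_ne {ι : Type*} (v : ι → M) (i₀ : ι)
    (hv : v i₀ = 0) (hli : LinearIndependent R fun i : {i // i ≠ i₀} => v i)
    (w : ι → N) (hw : w i₀ = 0) :
    ∃ L : span R (range v) →ₗ[R] N, ∀ i (hi : v i ∈ span R (range v)), L ⟨v i, hi⟩ = w i := by
  have hspan : span R (range fun i : {i // i ≠ i₀} => v i) = span R (range v) := by
    refine le_antisymm (span_mono (range_comp_subset_range _ v)) (span_le.mpr ?_)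
    rintro _ ⟨i, rfl⟩
    by_cases hi : i = i₀
    · simp [hi, hv]
    · exact subset_span ⟨⟨i, hi⟩, rfl⟩
  let b := (Module.Basis.span hli).map (LinearEquiv.ofEq _ _ hspan)
  refine ⟨b.constr R fun i => w i, fun i hi => ?_⟩
  by_cases hi₀ : i = i₀
  · subst hi₀
    rw [show (⟨v i, hi⟩ : span R (range v)) = 0 from Subtype.ext hv, map_zero, hw]
  · have hb : (⟨v i, hi⟩ : span R (range v)) = b ⟨i, hi₀⟩ := by
      ext
      simp [b, Module.Basis.span_apply]
    rw [hb, Module.Basis.constr_basis]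

theorem exists_linearMap_span_range_of_leftCoset {G : Type*} [Group G] {H : Subgroup G}
    (f : G → M) (hf : ∀ g h : G, h ∈ H → f (g * h) = f g) (hf1 : f 1 = 0)
    (hli : LinearIndependent R fun x : {x : G ⧸ H // x ≠ ((1 : G) : G ⧸ H)} =>
      Quotient.liftOn' x.1 f fun _ _ => apply_eq_of_leftRel hf)
    (φ : G → N) (hφ : ∀ g h : G, h ∈ H → φ (g * h) = φ g) (hφ1 : φ 1 = 0) :
    ∃ L : span R (range f) →ₗ[R] N, ∀ g, L ⟨f g, subset_span ⟨g, rfl⟩⟩ = φ g := by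
  have hrange : range (fun x : G ⧸ H => Quotient.liftOn' x f fun _ _ => apply_eq_of_leftRel hf) =
      range f := range_quotient_lift_on' _
  have key := exists_linearMap_span_range_of_linearIndependent_ne
    (fun x : G ⧸ H => Quotient.liftOn' x f fun _ _ => apply_eq_of_leftRel hf) ((1 : G) : G ⧸ H)
    hf1 hli (fun x => Quotient.liftOn' x φ fun _ _ => apply_eq_of_leftRel hφ) hφ1
  rw [hrange] at key
  obtain ⟨L, hL⟩ := key
  exact ⟨L, fun g => hL g _⟩

end Span

section Cocycle

variable {G R E : Type*} [Group G] [Ring R] [AddCommGroup E] [Module R E]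
  {π : G → E →ₗ[R] E} {β : G → E}

theorem cocycle_one (hπ1 : π 1 = LinearMap.id) (hβ : ∀ g h : G, β (g * h) = β g + π g (β h)) :
    β 1 = 0 := by
  simpa [hπ1] using hβ 1 1

theorem map_mem_span_range_of_cocycle (hβ : ∀ g h : G, β (g * h) = β g + π g (β h)) (g : G)
    {x : E} (hx : x ∈ span R (range β)) : π g x ∈ span R (range β) := by
  refine (span_le.mpr ?_ : span R (range β) ≤ (span R (range β)).comap (π g)) hx
  rintro _ ⟨g', rfl⟩
  rw [SetLike.mem_coe, mem_comap, eq_sub_of_add_eq' (hβ g g').symm]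
  exact sub_mem (subset_span ⟨_, rfl⟩) (subset_span ⟨_, rfl⟩)

variable (π) in
def cocycleDefect (α : G → E) (g g' : G) : E := α (g * g') - α g - π g (α g')

theorem cocycleDefect_mul_right_of_mem {H : Subgroup G} {α : G → E}
    (hαH : ∀ g h : G, h ∈ H → α (g * h) = α g) (g g' : G) {h : G} (hh : h ∈ H) :
    cocycleDefect π α g (g' * h) = cocycleDefect π α g g' := by
  simp only [cocycleDefect, ← mul_assoc, hαH _ _ hh]

theorem cocycleDefect_one_right {α : G → E} (hα1 : α 1 = 0) (g : G) :
    cocycleDefect π α g 1 = 0 := by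
  simp [cocycleDefect, hα1]

theorem cocycleDefect_mul_left (hπmul : ∀ g h : G, π (g * h) = (π g).comp (π h))
    (α : G → E) (g h g' : G) :
    cocycleDefect π α (g * h) g' =
      cocycleDefect π α g (h * g') - cocycleDefect π α g h + π g (cocycleDefect π α h g') := by
  simp only [cocycleDefect, hπmul, mul_assoc, LinearMap.comp_apply, map_sub]
  abel

theorem leibniz_of_apply_eq_cocycleDefect (hπmul : ∀ g h : G, π (g * h) = (π g).comp (π h))
    (hβ : ∀ g h : G, β (g * h) = β g + π g (β h)) {α : G → E}
    (D : G → span R (range β) →ₗ[R] E)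
    (hD : ∀ g g', D g ⟨β g', subset_span ⟨g', rfl⟩⟩ = cocycleDefect π α g g') (g h : G) :
    D (g * h) = (D g).comp ((π h).restrict fun _ => map_mem_span_range_of_cocycle hβ h)
      + (π g).comp (D h) := by
  refine LinearMap.ext_on_span_range fun g' => ?_
  have hrestrict : (π h).restrict (fun _ => map_mem_span_range_of_cocycle hβ h)
      ⟨β g', subset_span ⟨g', rfl⟩⟩ =
        ⟨β (h * g'), subset_span ⟨_, rfl⟩⟩ - ⟨β h, subset_span ⟨_, rfl⟩⟩ :=
    Subtype.ext (eq_sub_of_add_eq' (hβ h g').symm)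
  simp only [LinearMap.add_apply, LinearMap.comp_apply, hrestrict, map_sub, hD]
  exact cocycleDefect_mul_left hπmul α g h g'

end Cocycle

/-- Given a cocycle `β` for a representation `π` of `G` on a real vector space `E` that is
constant on left cosets of a subgroup `H` and whose induced family over the nontrivial cosets
is linearly independent, and any `α : G → E` with `α(1) = 0` that is constant on left cosets
of `H`, the span `E'` of the image of `β` is `π`-invariant and there is a unique family of
linear maps `D(g) : E' → E` with `D(g)(β(g')) = α(gg') − α(g) − π(g)α(g')`; this family
satisfies the Leibniz rule `D(gh) = D(g)∘π(h) + π(g)∘D(h)` on `E'`. -/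
theorem exists_unique_derivation_on_span {G : Type*} [Group G] (H : Subgroup G)
    {E : Type*} [AddCommGroup E] [Module ℝ E]
    (π : G → E →ₗ[ℝ] E) (hπ1 : π 1 = LinearMap.id)
    (hπmul : ∀ g h : G, π (g * h) = (π g).comp (π h))
    (β : G → E) (hβ : ∀ g h : G, β (g * h) = β g + π g (β h))
    (hβH : ∀ g h : G, h ∈ H → β (g * h) = β g)
    (hli : LinearIndependent ℝ fun x : {x : G ⧸ H // x ≠ ((1 : G) : G ⧸ H)} =>
      Quotient.liftOn' x.1 β (fun a b hab => by
        have h1 : a⁻¹ * b ∈ H := QuotientGroup.leftRel_apply.mp hab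
        have h2 := hβH a (a⁻¹ * b) h1
        rw [mul_inv_cancel_left] at h2
        exact h2.symm))
    (α : G → E) (hα1 : α 1 = 0) (hαH : ∀ g h : G, h ∈ H → α (g * h) = α g) :
    ∃ hinv : ∀ (g : G) (x : E), x ∈ Submodule.span ℝ (Set.range β) →
        π g x ∈ Submodule.span ℝ (Set.range β),
      ∃ D : G → (↥(Submodule.span ℝ (Set.range β)) →ₗ[ℝ] E),
        (∀ g g' : G,
          D g ⟨β g', Submodule.subset_span ⟨g', rfl⟩⟩ = α (g * g') - α g - π g (α g')) ∧
        (∀ g h : G,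
          D (g * h) = (D g).comp ((π h).restrict fun x hx => hinv h x hx)
            + (π g).comp (D h)) ∧
        (∀ D' : G → (↥(Submodule.span ℝ (Set.range β)) →ₗ[ℝ] E),
          (∀ g g' : G,
            D' g ⟨β g', Submodule.subset_span ⟨g', rfl⟩⟩ = α (g * g') - α g - π g (α g')) →
          D' = D) := by
  choose D hD using fun g => exists_linearMap_span_range_of_leftCoset β hβH (cocycle_one hπ1 hβ)
    hli (cocycleDefect π α g) (fun _ _ => cocycleDefect_mul_right_of_mem hαH g _)
    (cocycleDefect_one_right hα1 g)
  refine ⟨fun g _ => map_mem_span_range_of_cocycle hβ g, D, hD,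
    leibniz_of_apply_eq_cocycleDefect hπmul hβ D hD, fun D' hD' => ?_⟩
  exact funext fun g => LinearMap.ext_on_span_range fun g' => (hD' g g').trans (hD g g').symm
end

section
/- There is a continuous linear equivalence F from ℓ¹₀ = ℓ¹₀ℕ onto ℓ¹(ℕ∖{0}), namely restriction of a zero-sum summable sequence to the coordinates indexed by ℕ∖{0}, satisfying ‖F(f)‖ ≤ ‖f‖ for all f ∈ ℓ¹₀ and ‖F⁻¹(h)‖ ≤ 2‖h‖ for all h ∈ ℓ¹(ℕ∖{0}). In particular, the Banach–Mazur distance between ℓ¹₀ and ℓ¹ is at most 2. -/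
open scoped ENNReal

/-- Any element of `ℓ¹Q` is summable. -/
theorem l1summable {Q : Type*} (f : lp (fun _ : Q => ℝ) 1) : Summable fun q : Q => f q := by
  have h := (lp.memℓp f).summable (p := 1) (by norm_num)
  simp only [ENNReal.toReal_one, Real.rpow_one] at h
  exact h.of_norm

/-- `ℓ¹₀Q`, the subspace of zero-sum elements of `ℓ¹Q`. -/
noncomputable def l1zero (Q : Type*) : Submodule ℝ (lp (fun _ : Q => ℝ) 1) where
  carrier := {f | ∑' q : Q, f q = 0}
  add_mem' := by
    intro f g hf hg
    simp only [Set.mem_setOf_eq] at *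
    have hpt : ∀ q : Q, (f + g) q = f q + g q := fun q => by
      rw [lp.coeFn_add]; rfl
    rw [tsum_congr hpt, Summable.tsum_add (l1summable f) (l1summable g), hf, hg, add_zero]
  zero_mem' := by
    simp only [Set.mem_setOf_eq]
    have hpt : ∀ q : Q, (0 : lp (fun _ : Q => ℝ) 1) q = 0 := fun q => by
      rw [lp.coeFn_zero]; rfl
    rw [tsum_congr hpt, tsum_zero]
  smul_mem' := by
    intro c f hf
    simp only [Set.mem_setOf_eq] at *
    have hpt : ∀ q : Q, (c • f) q = c * f q := fun q => by
      rw [lp.coeFn_smul]; rfl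
    rw [tsum_congr hpt, tsum_mul_left, hf, mul_zero]

/-! Restricting to the coordinates `q ≠ q₀` splits the ℓ¹ norm as `‖f‖ = |f q₀| + ‖f|_{q ≠ q₀}‖`.
For a zero-sum `f` we have `f q₀ = -∑_{q ≠ q₀} f q`, so `|f q₀| ≤ ‖f|_{q ≠ q₀}‖`: restriction is
injective on `ℓ¹₀Q` and at most doubles norms on the way back, and it is onto because any `h` on
`{q ≠ q₀}` extends to a zero-sum sequence by the value `-∑ h` at `q₀`. -/

section SumExceptPoint

variable {Q : Type*} (q₀ : Q)

theorem summable_subtype_ne_iff {α : Type*} [AddCommGroup α] [TopologicalSpace α]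
    [IsTopologicalAddGroup α] {f : Q → α} : (Summable fun q : {q // q ≠ q₀} => f q) ↔ Summable f :=
  (Set.finite_singleton q₀).summable_compl_iff

theorem Summable.tsum_eq_add_tsum_ne {α : Type*} [UniformSpace α] [AddCommGroup α]
    [IsUniformAddGroup α] [CompleteSpace α] [T2Space α] {f : Q → α} (hf : Summable f) :
    ∑' q, f q = f q₀ + ∑' q : {q // q ≠ q₀}, f q :=
  ((hasSum_singleton q₀ f).add_compl (hf.subtype _).hasSum).tsum_eq

end SumExceptPoint

section Restriction

variable {Q E : Type*} [NormedAddCommGroup E]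

theorem memℓp_one_iff {f : Q → E} : Memℓp f 1 ↔ Summable fun q => ‖f q‖ := by
  simpa using memℓp_gen_iff (E := fun _ => E) (f := f) (p := 1) (by norm_num)

theorem lp.norm_eq_tsum_norm_of_one (f : lp (fun _ : Q => E) 1) : ‖f‖ = ∑' q, ‖f q‖ := by
  simpa using lp.norm_eq_tsum_rpow (p := 1) (by norm_num) f

variable [NormedSpace ℝ E] (q₀ : Q)

def lp.restrictNe : lp (fun _ : Q => E) 1 →ₗ[ℝ] lp (fun _ : {q // q ≠ q₀} => E) 1 where
  toFun f := ⟨fun q => f q, memℓp_one_iff.2 ((memℓp_one_iff.1 (lp.memℓp f)).subtype _)⟩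
  map_add' _ _ := rfl
  map_smul' _ _ := rfl

theorem lp.norm_eq_norm_apply_add_norm_restrictNe (f : lp (fun _ : Q => E) 1) :
    ‖f‖ = ‖f q₀‖ + ‖lp.restrictNe q₀ f‖ := by
  rw [norm_eq_tsum_norm_of_one, norm_eq_tsum_norm_of_one,
    (memℓp_one_iff.1 (lp.memℓp f)).tsum_eq_add_tsum_ne q₀]
  rfl

theorem lp.norm_restrictNe_le (f : lp (fun _ : Q => E) 1) : ‖lp.restrictNe q₀ f‖ ≤ ‖f‖ := by
  rw [lp.norm_eq_norm_apply_add_norm_restrictNe q₀ f]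
  exact le_add_of_nonneg_left (norm_nonneg _)

end Restriction

section ZeroSum

variable {Q : Type*} (q₀ : Q)

theorem norm_apply_le_norm_restrictNe_of_mem_l1zero {f : lp (fun _ : Q => ℝ) 1}
    (hf : f ∈ l1zero Q) : ‖f q₀‖ ≤ ‖lp.restrictNe q₀ f‖ := by
  have hsplit := (l1summable f).tsum_eq_add_tsum_ne q₀
  have hf' : ∑' q, f q = 0 := hf
  have hval : f q₀ = -∑' q, lp.restrictNe q₀ f q := by
    change f q₀ = -∑' q : {q // q ≠ q₀}, f q
    linarith
  rw [hval, norm_neg, lp.norm_eq_tsum_norm_of_one]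
  exact norm_tsum_le_tsum_norm (memℓp_one_iff.1 (lp.memℓp _))

theorem norm_le_two_mul_norm_restrictNe_of_mem_l1zero {f : lp (fun _ : Q => ℝ) 1}
    (hf : f ∈ l1zero Q) : ‖f‖ ≤ 2 * ‖lp.restrictNe q₀ f‖ := by
  rw [lp.norm_eq_norm_apply_add_norm_restrictNe q₀ f]
  linarith [norm_apply_le_norm_restrictNe_of_mem_l1zero q₀ hf]

noncomputable def l1zeroRestrictNe : l1zero Q →ₗ[ℝ] lp (fun _ : {q // q ≠ q₀} => ℝ) 1 :=
  (lp.restrictNe q₀).comp (l1zero Q).subtype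

theorem l1zeroRestrictNe_injective : Function.Injective (l1zeroRestrictNe q₀) := by
  refine (injective_iff_map_eq_zero _).2 fun f hf => ?_
  have hle := norm_le_two_mul_norm_restrictNe_of_mem_l1zero q₀ f.2
  change lp.restrictNe q₀ (f : lp (fun _ : Q => ℝ) 1) = 0 at hf
  rw [hf, norm_zero, mul_zero] at hle
  exact Subtype.ext (norm_le_zero_iff.1 hle)

theorem l1zeroRestrictNe_surjective : Function.Surjective (l1zeroRestrictNe q₀) := by
  classical
  intro h
  let g : Q → ℝ := fun q => if hq : q = q₀ then -∑' q, h q else h ⟨q, hq⟩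
  have hg_ne (q : {q // q ≠ q₀}) : g q = h q := dif_neg q.2
  have hg : Memℓp g 1 := by
    rw [memℓp_one_iff, ← summable_subtype_ne_iff q₀]
    simpa only [hg_ne] using memℓp_one_iff.1 (lp.memℓp h)
  have hg_sum : ∑' q, g q = 0 := by
    rw [(memℓp_one_iff.1 hg).of_norm.tsum_eq_add_tsum_ne q₀, tsum_congr hg_ne,
      show g q₀ = -∑' q, h q from dif_pos rfl, neg_add_cancel]
  exact ⟨⟨⟨g, hg⟩, hg_sum⟩, lp.ext (funext hg_ne)⟩

noncomputable def l1zeroLinearEquivRestrictNe :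
    l1zero Q ≃ₗ[ℝ] lp (fun _ : {q // q ≠ q₀} => ℝ) 1 :=
  LinearEquiv.ofBijective (l1zeroRestrictNe q₀)
    ⟨l1zeroRestrictNe_injective q₀, l1zeroRestrictNe_surjective q₀⟩

theorem l1zeroLinearEquivRestrictNe_apply (f : l1zero Q) :
    l1zeroLinearEquivRestrictNe q₀ f = lp.restrictNe q₀ (f : lp (fun _ : Q => ℝ) 1) :=
  rfl

theorem norm_l1zeroLinearEquivRestrictNe_le (f : l1zero Q) :
    ‖l1zeroLinearEquivRestrictNe q₀ f‖ ≤ ‖f‖ := by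
  rw [l1zeroLinearEquivRestrictNe_apply, Submodule.coe_norm]
  exact lp.norm_restrictNe_le q₀ _

theorem norm_l1zeroLinearEquivRestrictNe_symm_le (h : lp (fun _ : {q // q ≠ q₀} => ℝ) 1) :
    ‖(l1zeroLinearEquivRestrictNe q₀).symm h‖ ≤ 2 * ‖h‖ := by
  conv_rhs => rw [← (l1zeroLinearEquivRestrictNe q₀).apply_symm_apply h,
    l1zeroLinearEquivRestrictNe_apply]
  exact norm_le_two_mul_norm_restrictNe_of_mem_l1zero q₀
    ((l1zeroLinearEquivRestrictNe q₀).symm h).2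

end ZeroSum

/-- There is a continuous linear equivalence from `ℓ¹₀ = ℓ¹₀ℕ` onto `ℓ¹(ℕ∖{0})`, given by
restricting a zero-sum summable sequence to the coordinates indexed by `ℕ∖{0}`, which satisfies
`‖F f‖ ≤ ‖f‖` and `‖F⁻¹ h‖ ≤ 2‖h‖`.  In particular the Banach–Mazur distance between `ℓ¹₀`
and `ℓ¹` is at most `2`. -/
theorem exists_equiv_l1zero_l1_norm_le_two :
    ∃ F : ↥(l1zero ℕ) ≃L[ℝ] lp (fun _ : {n : ℕ // n ≠ 0} => ℝ) 1,
      (∀ (f : ↥(l1zero ℕ)) (n : {n : ℕ // n ≠ 0}),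
        (F f) n = (f : lp (fun _ : ℕ => ℝ) 1) (n : ℕ)) ∧
      (∀ f : ↥(l1zero ℕ), ‖F f‖ ≤ ‖f‖) ∧
      (∀ h : lp (fun _ : {n : ℕ // n ≠ 0} => ℝ) 1, ‖F.symm h‖ ≤ 2 * ‖h‖) := by
  let e := l1zeroLinearEquivRestrictNe 0
  have he := norm_l1zeroLinearEquivRestrictNe_le (0 : ℕ)
  have he_symm := norm_l1zeroLinearEquivRestrictNe_symm_le (0 : ℕ)
  refine ⟨e.toContinuousLinearEquivOfBounds 1 2 (fun f => ?_) he_symm, fun _ _ => rfl, he,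
    he_symm⟩
  simpa only [one_mul] using he f
end

section
/- There exists δ > 0 such that every continuous linear equivalence F : ℓ¹₀ → ℓ¹ satisfies ‖F‖_op · ‖F⁻¹‖_op ≥ 1 + δ; that is, the Banach–Mazur distance between ℓ¹₀ = ℓ¹₀ℕ and ℓ¹ = ℓ¹ℕ is strictly greater than 1. -/
/-!
Let `T = F` and let `S` be `F⁻¹` followed by the inclusion `ℓ¹₀ ⊆ ℓ¹`; suppose `‖T‖ ‖S‖ < 6/5`.
The functional `x ↦ x 0 - x j` equals `1` on the unit vector `(e₀ - eⱼ)/2 = S (T ((e₀ - eⱼ)/2))`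
of `ℓ¹₀`, and a functional on `ℓ¹` is bounded by its values on the unit vectors, so some `v = S eₙ`
has `|v 0 - v j| > 5‖S‖/6`. Since `v` has sum zero and norm at most `‖S‖`, this forces
`|v 0|, |v j| > ‖S‖/3` and makes the remaining coordinate of `{0, 1, 2}` at most `‖S‖/6`.
Doing this for `j = 1` and `j = 2` gives `n ≠ m` with `|S eₙ 0|, |S eₘ 0| > ‖S‖/3`. But in `ℓ¹`,
`‖v + w‖ + ‖v - w‖ ≤ 2 (‖v‖ + ‖w‖) - 2 min (|v 0|, |w 0|)`, while
`2 = ‖eₙ ± eₘ‖ ≤ ‖T‖ ‖S (eₙ ± eₘ)‖`; together these give `‖T‖ ‖S‖ ≥ 6/5`.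
-/

open scoped ENNReal

open scoped lp

theorem third_lt_abs_of_abs_sub_gt {x y z N : ℝ} (h : |x| + |y| + |z| + |x + y + z| ≤ N)
    (hxy : 5 / 6 * N < |x - y|) : N / 3 < |x| ∧ N / 3 < |y| ∧ |z| ≤ N / 6 := by
  have h1 : |x - y| ≤ |x| + |y| := abs_sub x y
  have h2 : |x + y| ≤ |x + y + z| + |z| := by
    simpa using abs_sub (x + y + z) z
  have h3 : |x - y| ≤ 2 * |x| + |x + y| := by
    calc |x - y| = |2 * x - (x + y)| := by ring_nf
      _ ≤ |2 * x| + |x + y| := abs_sub _ _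
      _ = 2 * |x| + |x + y| := by rw [abs_mul, abs_two]
  have h4 : |x - y| ≤ |x + y| + 2 * |y| := by
    calc |x - y| = |(x + y) - 2 * y| := by ring_nf
      _ ≤ |x + y| + |2 * y| := abs_sub _ _
      _ = |x + y| + 2 * |y| := by rw [abs_mul, abs_two]
  have := abs_nonneg (x + y + z)
  have := abs_nonneg z
  exact ⟨by linarith, by linarith, by linarith⟩

namespace lp

variable {α β : Type*}

theorem hasSum_abs (f : ℓ¹(α, ℝ)) : HasSum (fun i => |f i|) ‖f‖ := by
  simpa using lp.hasSum_norm (p := 1) (by norm_num) f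

theorem sum_abs_add_abs_sum_le_norm (w : ℓ¹(α, ℝ)) (hw : ∑' i, w i = 0) (s : Finset α) :
    ∑ i ∈ s, |w i| + |∑ i ∈ s, w i| ≤ ‖w‖ := by
  have hsum := (l1summable w).sum_add_tsum_compl (s := s)
  have habs := (hasSum_abs w).summable.sum_add_tsum_compl (s := s)
  have hcompl : |∑' i : ↑(↑s : Set α)ᶜ, w i| ≤ ∑' i : ↑(↑s : Set α)ᶜ, |w i| := by
    simpa only [Real.norm_eq_abs] using
      norm_tsum_le_tsum_norm (f := fun i : ↑(↑s : Set α)ᶜ => w i) ((l1summable w).norm.subtype _)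
  rw [(hasSum_abs w).tsum_eq] at habs
  rw [show ∑ i ∈ s, w i = -∑' i : ↑(↑s : Set α)ᶜ, w i by linarith, abs_neg]
  linarith

theorem norm_add_add_norm_sub_add_two_mul_min_le (x y : ℓ¹(α, ℝ)) (q : α) :
    ‖x + y‖ + ‖x - y‖ + 2 * min |x q| |y q| ≤ 2 * (‖x‖ + ‖y‖) := by
  have hpoint : ∀ u v : ℝ, 2 * min |u| |v| = 2 * (|u| + |v|) - (|u + v| + |u - v|) := by
    intro u v
    rcases abs_cases u with ⟨hu, _⟩ | ⟨hu, _⟩ <;> rcases abs_cases v with ⟨hv, _⟩ | ⟨hv, _⟩ <;>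
      rcases abs_cases (u + v) with ⟨h1, _⟩ | ⟨h1, _⟩ <;>
      rcases abs_cases (u - v) with ⟨h2, _⟩ | ⟨h2, _⟩ <;>
      simp only [min_def, hu, hv, h1, h2] <;> split_ifs <;> linarith
  have hmin : HasSum (fun i => 2 * min |x i| |y i|) (2 * (‖x‖ + ‖y‖) - (‖x + y‖ + ‖x - y‖)) := by
    refine ((((hasSum_abs x).add (hasSum_abs y)).mul_left 2).sub
      ((hasSum_abs (x + y)).add (hasSum_abs (x - y)))).congr_fun fun i => ?_
    exact hpoint (x i) (y i)
  linarith [le_hasSum hmin q fun i _ => by positivity]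

theorem norm_apply_le_of_norm_apply_single_le [DecidableEq α] {E : Type*} [NormedAddCommGroup E]
    [NormedSpace ℝ E] (Φ : ℓ¹(α, ℝ) →L[ℝ] E) {D : ℝ} (h : ∀ i, ‖Φ (lp.single 1 i 1)‖ ≤ D)
    (y : ℓ¹(α, ℝ)) : ‖Φ y‖ ≤ D * ‖y‖ := by
  have hΦ : HasSum (fun i => y i • Φ (lp.single 1 i 1)) (Φ y) := by
    convert (lp.hasSum_single ENNReal.one_ne_top y).mapL Φ using 2 with i
    rw [← map_smul, ← lp.single_smul, smul_eq_mul, mul_one]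
  refine hΦ.norm_le_of_bounded ((hasSum_abs y).mul_left D) fun i => ?_
  rw [norm_smul, Real.norm_eq_abs, mul_comm]
  exact mul_le_mul_of_nonneg_right (h i) (abs_nonneg _)

theorem exists_lt_abs_apply_single_sub [DecidableEq α] (S : ℓ¹(α, ℝ) →L[ℝ] ℓ¹(β, ℝ))
    (a : ℓ¹(α, ℝ)) (i j : β) {D : ℝ} (h : D * ‖a‖ < |S a i - S a j|) :
    ∃ n, D < |S (lp.single 1 n 1) i - S (lp.single 1 n 1) j| := by
  by_contra! hD
  exact h.not_ge <| norm_apply_le_of_norm_apply_single_le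
    ((lp.evalCLM ℝ (fun _ => ℝ) 1 i - lp.evalCLM ℝ (fun _ => ℝ) 1 j) ∘L S) hD a

theorem third_lt_abs_of_tsum_eq_zero [DecidableEq α] {w : ℓ¹(α, ℝ)} (hw : ∑' i, w i = 0) {N : ℝ}
    (hN : ‖w‖ ≤ N) {i j k : α} (hij : i ≠ j) (hik : i ≠ k) (hjk : j ≠ k)
    (h : 5 / 6 * N < |w i - w j|) : N / 3 < |w i| ∧ N / 3 < |w j| ∧ |w k| ≤ N / 6 := by
  refine third_lt_abs_of_abs_sub_gt (le_trans ?_ hN) h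
  simpa [hij, hik, hjk, add_assoc] using sum_abs_add_abs_sum_le_norm w hw {i, j, k}

theorem norm_single_add_single [DecidableEq α] {i j : α} (hij : i ≠ j) (a b : ℝ) :
    ‖(lp.single 1 i a + lp.single 1 j b : ℓ¹(α, ℝ))‖ = |a| + |b| := by
  rw [← (hasSum_abs _).tsum_eq, tsum_eq_sum (s := {i, j})]
  · simp [Finset.sum_pair hij, Pi.single_apply, hij, hij.symm]
  · intro q hq
    simp only [Finset.mem_insert, Finset.mem_singleton, not_or] at hq
    simp [hq.1, hq.2]

theorem tsum_single_add_single [DecidableEq α] (i j : α) (a b : ℝ) :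
    ∑' q, (lp.single 1 i a + lp.single 1 j b : ℓ¹(α, ℝ)) q = a + b := by
  simp only [lp.coeFn_add, Pi.add_apply]
  rw [(l1summable _).tsum_add (l1summable _)]
  simp

theorem two_add_mul_min_le [DecidableEq α] (S : ℓ¹(α, ℝ) →L[ℝ] ℓ¹(β, ℝ)) {N : ℝ}
    (hS : ∀ y, ‖y‖ ≤ N * ‖S y‖) {n m : α} (hnm : n ≠ m) (q : β) :
    2 + N * min |S (lp.single 1 n 1) q| |S (lp.single 1 m 1) q| ≤
      N * (‖S (lp.single 1 n 1)‖ + ‖S (lp.single 1 m 1)‖) := by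
  set v := S (lp.single 1 n 1)
  set w := S (lp.single 1 m 1)
  have hN : 0 ≤ N := by
    have := hS (lp.single 1 n 1)
    simp only [lp.norm_single zero_lt_one, norm_one] at this
    nlinarith [norm_nonneg v]
  have hadd : 2 ≤ N * ‖v + w‖ := by
    have := hS (lp.single 1 n 1 + lp.single 1 m 1)
    rw [norm_single_add_single hnm, map_add] at this
    norm_num at this
    exact this
  have hsub : 2 ≤ N * ‖v - w‖ := by
    have := hS (lp.single 1 n 1 + lp.single 1 m (-1))
    rw [norm_single_add_single hnm, lp.single_neg, ← sub_eq_add_neg, map_sub] at this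
    norm_num at this
    exact this
  nlinarith [mul_le_mul_of_nonneg_left (norm_add_add_norm_sub_add_two_mul_min_le v w q) hN]

end lp

/-- The Banach–Mazur distance between `ℓ¹₀ = ℓ¹₀ℕ` and `ℓ¹ = ℓ¹ℕ` is strictly greater
than `1`: there is `δ > 0` such that every continuous linear equivalence `F : ℓ¹₀ → ℓ¹`
satisfies `‖F‖ ⬝ ‖F⁻¹‖ ≥ 1 + δ`. -/
theorem banachMazur_l1zero_l1_gt_one :
    ∃ δ : ℝ, 0 < δ ∧
      ∀ F : ↥(l1zero ℕ) ≃L[ℝ] lp (fun _ : ℕ => ℝ) 1,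
        1 + δ ≤ ‖(F.toContinuousLinearMap :
            ↥(l1zero ℕ) →L[ℝ] lp (fun _ : ℕ => ℝ) 1)‖ *
          ‖(F.symm.toContinuousLinearMap :
            lp (fun _ : ℕ => ℝ) 1 →L[ℝ] ↥(l1zero ℕ))‖ := by
  refine ⟨1 / 5, by norm_num, fun F => ?_⟩
  set T : ↥(l1zero ℕ) →L[ℝ] ℓ¹(ℕ, ℝ) := F.toContinuousLinearMap
  set S : ℓ¹(ℕ, ℝ) →L[ℝ] ℓ¹(ℕ, ℝ) := (l1zero ℕ).subtypeL ∘L F.symm.toContinuousLinearMap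
  have hS : ‖S‖ ≤ ‖F.symm.toContinuousLinearMap‖ :=
    ((l1zero ℕ).subtypeL.opNorm_comp_le _).trans <|
      mul_le_of_le_one_left F.symm.toContinuousLinearMap.opNorm_nonneg
        (Submodule.norm_subtypeL_le _)
  have hST : ∀ u : l1zero ℕ, S (T u) = u := fun u => by simp [S, T]
  have hTS : ∀ y, ‖y‖ ≤ ‖T‖ * ‖S y‖ := fun y => by simpa [S, T] using T.le_opNorm (F.symm y)
  set e : ℕ → ℓ¹(ℕ, ℝ) := fun n => lp.single 1 n 1
  have hSe : ∀ n, ‖S (e n)‖ ≤ ‖S‖ := fun n => by simpa [e] using S.le_opNorm (e n)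
  suffices 6 / 5 ≤ ‖T‖ * ‖S‖ by nlinarith [mul_le_mul_of_nonneg_left hS (norm_nonneg T)]
  by_contra! hsmall
  have hspread : ∀ j ≠ 0, ∃ n, 5 / 6 * ‖S‖ < |S (e n) 0 - S (e n) j| := fun j hj => by
    let u : ℓ¹(ℕ, ℝ) := lp.single 1 0 (1 / 2) + lp.single 1 j (-(1 / 2))
    have hu : u ∈ l1zero ℕ := by
      change ∑' q, u q = 0
      rw [lp.tsum_single_add_single]; ring
    apply lp.exists_lt_abs_apply_single_sub S (T ⟨u, hu⟩)
    have hu1 : ‖u‖ = 1 := by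
      rw [lp.norm_single_add_single hj.symm]
      norm_num
    have hTu : ‖T ⟨u, hu⟩‖ ≤ ‖T‖ := by
      simpa only [Submodule.coe_norm, hu1, mul_one] using T.le_opNorm ⟨u, hu⟩
    have hdiff : u 0 - u j = 1 := by
      norm_num [u, hj.symm]
    rw [hST]
    change _ < |u 0 - u j|
    rw [hdiff, abs_one]
    nlinarith [mul_le_mul_of_nonneg_left hTu (norm_nonneg S)]
  obtain ⟨n, hn⟩ := hspread 1 one_ne_zero
  obtain ⟨m, hm⟩ := hspread 2 two_ne_zero
  have hzero : ∀ n, ∑' q, S (e n) q = 0 := fun n => (F.symm (e n)).2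
  obtain ⟨hn0, hn1, -⟩ :=
    lp.third_lt_abs_of_tsum_eq_zero (hzero n) (hSe n) (k := 2) (by simp) (by simp) (by simp) hn
  obtain ⟨hm0, -, hm1⟩ :=
    lp.third_lt_abs_of_tsum_eq_zero (hzero m) (hSe m) (k := 1) (by simp) (by simp) (by simp) hm
  have hnm : n ≠ m := by
    rintro rfl
    linarith [norm_nonneg S]
  have hpair := lp.two_add_mul_min_le S hTS hnm 0
  nlinarith [mul_le_mul_of_nonneg_left (lt_min hn0 hm0).le (norm_nonneg T),
    mul_le_mul_of_nonneg_left (add_le_add (hSe n) (hSe m)) (norm_nonneg T)]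
end

section
/- Let F₂ = ⟨a,b⟩, let w ∈ F₂ be nontrivial, let E be a real normed space, let ρ be a representation of F₂ on E by linear isometries, and let e ∈ E. For each g ∈ F₂ the sets w₊(g) and w₋(g) are finite, so that η(g) = ∑_{h ∈ w₊(g)} ρ(h)e − ∑_{h ∈ w₋(g)} ρ(h)e is a well-defined element of E. Then η is a quasi-cocycle for ρ, i.e. sup_{g,g' ∈ F₂} ‖η(gg') − η(g) − ρ(g)η(g')‖ < ∞, and η is anti-symmetric: η(g⁻¹) = −ρ(g⁻¹)η(g) for all g ∈ F₂. -/
/-- The word length of an element of the free group `F₂`: the length of its reduced word. -/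
def wlen (g : FreeGroup (Fin 2)) : ℕ := g.toWord.length

/-- For `w, g ∈ F₂`, the set of `h ∈ F₂` such that `h` and `hw` both lie, in this order, on
the geodesic from `1` to `g` in the Cayley tree of `F₂`. -/
def wplus (w g : FreeGroup (Fin 2)) : Set (FreeGroup (Fin 2)) :=
  {h | wlen (h * w) = wlen h + wlen w ∧
    wlen h + wlen (h⁻¹ * g) = wlen g ∧
    wlen (h * w) + wlen ((h * w)⁻¹ * g) = wlen g}

/-- For `w, g ∈ F₂`, the set of `h ∈ F₂` such that `hw` and `h` both lie, in this order, on
the geodesic from `1` to `g` in the Cayley tree of `F₂`. -/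
def wminus (w g : FreeGroup (Fin 2)) : Set (FreeGroup (Fin 2)) :=
  {h | wlen h = wlen (h * w) + wlen w ∧
    wlen h + wlen (h⁻¹ * g) = wlen g ∧
    wlen (h * w) + wlen ((h * w)⁻¹ * g) = wlen g}

/-- The Brooks-type map `η(g) = ∑_{h ∈ w₊(g)} ρ(h)e − ∑_{h ∈ w₋(g)} ρ(h)e` associated to a
representation `ρ` of `F₂` by linear isometries, a nontrivial word `w` and a vector `e`. -/
noncomputable def brooksEta {E : Type*} [NormedAddCommGroup E] [NormedSpace ℝ E]
    (ρ : FreeGroup (Fin 2) → (E ≃ₗᵢ[ℝ] E)) (w : FreeGroup (Fin 2)) (e : E)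
    (g : FreeGroup (Fin 2)) : E :=
  (∑ᶠ h ∈ wplus w g, ρ h e) - ∑ᶠ h ∈ wminus w g, ρ h e


/-!
Reading the reduced word of `g` from the left, `w₊(g)` consists of the prefixes of `g` that are
followed by an occurrence of `w`, and `w₋(g)` of the prefixes that end with an occurrence of `w⁻¹`.
So `η(g)` is a sum over the occurrences of `w^{±1}` in the reduced word of `g`, each weighted by `ρ`
of a prefix. For such a sum `S`, the defect `S(AB) - S(A) - ρ(A) S(B)` only involves the at most
`|w| + 1` windows meeting the junction of `A` and `B`, and reversing a word exchanges the
occurrences of `w` and `w⁻¹`, so that `S(A⁻¹) = -ρ(A)⁻¹ S(A)`. As the reduced words of `g`, `g'`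
and `gg'` are `PC`, `C⁻¹Q` and `PQ`, the quasi-cocycle defect of `η` is a combination of three
such junction defects, hence bounded by a multiple of `|w| ‖e‖`.
-/

open FreeGroup Finset

namespace FreeGroup

variable {α : Type*} [DecidableEq α]

theorem toWord_mul_of_length_eq {x y : FreeGroup α}
    (h : (x * y).toWord.length = x.toWord.length + y.toWord.length) :
    (x * y).toWord = x.toWord ++ y.toWord :=
  (toWord_mul_sublist x y).eq_of_length (by rw [h, List.length_append])

theorem toWord_mul_of_isReduced {x y : FreeGroup α} (h : IsReduced (x.toWord ++ y.toWord)) :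
    (x * y).toWord = x.toWord ++ y.toWord := by
  rw [toWord_mul, h.reduce_eq]

theorem norm_add_norm_inv_mul_eq_iff_prefix {h g : FreeGroup α} :
    h.norm + (h⁻¹ * g).norm = g.norm ↔ h.toWord <+: g.toWord := by
  constructor
  · intro H
    have := toWord_mul_of_length_eq (x := h) (y := h⁻¹ * g)
      (by rw [mul_inv_cancel_left]; exact H.symm)
    rw [mul_inv_cancel_left] at this
    exact ⟨_, this.symm⟩
  · rintro ⟨R, hR⟩
    have hR' : (h⁻¹ * g).toWord = R := by
      rw [← mk_toWord (x := g), ← hR, ← mul_mk, mk_toWord, inv_mul_cancel_left, toWord_mk,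
        (isReduced_toWord.infix (hR ▸ List.suffix_append h.toWord R).isInfix).reduce_eq]
    rw [FreeGroup.norm, FreeGroup.norm, FreeGroup.norm, hR', ← hR, List.length_append]

theorem exists_reduce_append_eq {U V : List (α × Bool)} (hU : IsReduced U) (hV : IsReduced V) :
    ∃ P C Q, U = P ++ C ∧ V = invRev C ++ Q ∧ reduce (U ++ V) = P ++ Q := by
  induction U using List.reverseRecOn generalizing V with
  | nil => exact ⟨[], [], V, rfl, rfl, hV.reduce_eq⟩
  | append_singleton U x ih =>
    cases V with
    | nil => exact ⟨U ++ [x], [], [], by simp, rfl, by simpa using hU.reduce_eq⟩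
    | cons y V =>
      by_cases hxy : y = (x.1, !x.2)
      · subst hxy
        obtain ⟨P, C, Q, rfl, rfl, hPQ⟩ :=
          ih (hU.infix (List.prefix_append U [x]).isInfix) (hV.infix (List.suffix_cons _ V).isInfix)
        refine ⟨P, C ++ [x], Q, by simp, by simp [invRev], ?_⟩
        rw [← hPQ, show P ++ C ++ [x] ++ (x.1, !x.2) :: (invRev C ++ Q)
          = P ++ C ++ (x.1, x.2) :: (x.1, !x.2) :: (invRev C ++ Q) by simp]
        exact reduce.Step.eq Red.Step.not
      · refine ⟨U ++ [x], [], y :: V, by simp, rfl, IsReduced.reduce_eq ?_⟩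
        refine IsReduced.append_overlap hU ?_ (List.cons_ne_nil x [])
        refine isReduced_cons_cons.mpr ⟨fun h => by_contra fun hne => hxy ?_, hV⟩
        exact Prod.ext h.symm (Bool.eq_not.mpr (Ne.symm hne))

end FreeGroup

theorem map_mul_apply {M E : Type*} [Monoid M] [NormedAddCommGroup E] [NormedSpace ℝ E]
    (ρ : M →* (E ≃ₗᵢ[ℝ] E)) (g h : M) (x : E) : ρ (g * h) x = ρ g (ρ h x) := by
  rw [_root_.map_mul, LinearIsometryEquiv.coe_mul, Function.comp_apply]

section Occurrences

variable {α : Type*} [DecidableEq α] {E : Type*} [NormedAddCommGroup E] [NormedSpace ℝ E]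
  (ρ : FreeGroup α →* (E ≃ₗᵢ[ℝ] E)) (W : List (α × Bool)) (v : E)

def occurrenceTerm (L : List (α × Bool)) (n : ℕ) : E :=
  if W <+: L.drop n then ρ (mk (L.take n)) v else 0

def occurrenceSum (L : List (α × Bool)) : E :=
  ∑ n ∈ range (L.length + 1), occurrenceTerm ρ W v L n

theorem occurrenceTerm_eq_zero_of_lt {L : List (α × Bool)} {n : ℕ} (h : L.length - n < W.length) :
    occurrenceTerm ρ W v L n = 0 :=
  if_neg fun hW => by have := hW.length_le; simp only [List.length_drop] at this; omega

theorem norm_occurrenceTerm_le (L : List (α × Bool)) (n : ℕ) :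
    ‖occurrenceTerm ρ W v L n‖ ≤ ‖v‖ := by
  unfold occurrenceTerm; split_ifs <;> simp

theorem occurrenceTerm_append_length_add (A B : List (α × Bool)) (i : ℕ) :
    occurrenceTerm ρ W v (A ++ B) (A.length + i) = ρ (mk A) (occurrenceTerm ρ W v B i) := by
  simp only [occurrenceTerm, List.drop_length_add_append, List.take_length_add_append, ← mul_mk,
    map_mul_apply, apply_ite (ρ (mk A)), map_zero]

theorem occurrenceTerm_append_of_le {A : List (α × Bool)} (B : List (α × Bool)) {n : ℕ}
    (h : n + W.length ≤ A.length) :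
    occurrenceTerm ρ W v (A ++ B) n = occurrenceTerm ρ W v A n := by
  have hn : n ≤ A.length := by omega
  have hW : W.length ≤ (A.drop n).length := by simp only [List.length_drop]; omega
  simp only [occurrenceTerm, List.drop_append_of_le_length hn, List.take_append_of_le_length hn,
    List.prefix_iff_eq_take (l₂ := A.drop n ++ B), List.take_append_of_le_length hW,
    ← List.prefix_iff_eq_take]

theorem occurrenceSum_eq_sum_range_sub (L : List (α × Bool)) :
    occurrenceSum ρ W v L = ∑ n ∈ range (L.length + 1 - W.length), occurrenceTerm ρ W v L n := by
  refine (sum_subset (range_subset_range.mpr (by omega)) fun n hn hn' => ?_).symm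
  simp only [mem_range] at hn hn'
  exact occurrenceTerm_eq_zero_of_lt ρ W v (by omega)

theorem occurrenceSum_append (A B : List (α × Bool)) :
    occurrenceSum ρ W v (A ++ B) =
      ∑ n ∈ range A.length, occurrenceTerm ρ W v (A ++ B) n + ρ (mk A) (occurrenceSum ρ W v B) := by
  rw [occurrenceSum, List.length_append, add_assoc, sum_range_add, occurrenceSum, map_sum]
  simp only [occurrenceTerm_append_length_add]

theorem norm_occurrenceSum_append_sub_le (A B : List (α × Bool)) :
    ‖occurrenceSum ρ W v (A ++ B) - occurrenceSum ρ W v A - ρ (mk A) (occurrenceSum ρ W v B)‖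
      ≤ (2 * W.length + 1) * ‖v‖ := by
  set d := fun n => occurrenceTerm ρ W v (A ++ B) n - occurrenceTerm ρ W v A n
  have hd : ∑ n ∈ range (A.length - W.length), d n = 0 :=
    sum_eq_zero fun n hn => by
      rw [sub_eq_zero, occurrenceTerm_append_of_le ρ W v B (by simp only [mem_range] at hn; omega)]
  have hsplit : occurrenceSum ρ W v (A ++ B) - occurrenceSum ρ W v A
        - ρ (mk A) (occurrenceSum ρ W v B)
      = ∑ n ∈ Ico (A.length - W.length) A.length, d n - occurrenceTerm ρ W v A A.length := by
    have hA : occurrenceSum ρ W v A = ∑ n ∈ range A.length, occurrenceTerm ρ W v A n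
        + occurrenceTerm ρ W v A A.length := sum_range_succ _ _
    have hIco : ∑ n ∈ Ico (A.length - W.length) A.length, d n
        = ∑ n ∈ range A.length, occurrenceTerm ρ W v (A ++ B) n
          - ∑ n ∈ range A.length, occurrenceTerm ρ W v A n := by
      rw [← sum_sub_distrib, ← sum_range_add_sum_Ico d (Nat.sub_le A.length W.length), hd,
        zero_add]
    rw [occurrenceSum_append, hA, hIco]
    abel
  have hIco : ‖∑ n ∈ Ico (A.length - W.length) A.length, d n‖ ≤ W.length * (2 * ‖v‖) := by
    refine (norm_sum_le_of_le _ fun n _ => (norm_sub_le _ _).trans (add_le_add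
      (norm_occurrenceTerm_le ρ W v _ n) (norm_occurrenceTerm_le ρ W v _ n))).trans ?_
    rw [sum_const, Nat.card_Ico, nsmul_eq_mul, two_mul]
    gcongr
    exact_mod_cast (by omega : A.length - (A.length - W.length) ≤ W.length)
  rw [hsplit]
  refine (norm_sub_le _ _).trans ?_
  linarith [norm_occurrenceTerm_le ρ W v A A.length]

theorem occurrenceTerm_invRev_append (A U C : List (α × Bool)) (hU : U.length = W.length) :
    occurrenceTerm ρ W v (invRev (A ++ U ++ C)) C.length =
        ρ (mk (A ++ U ++ C))⁻¹
        (occurrenceTerm ρ (invRev W) (ρ (mk W)⁻¹ v) (A ++ U ++ C) A.length) := by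
  have hprefix : ∀ {X Y Z : List (α × Bool)}, X.length = Y.length → (X <+: Y ++ Z ↔ X = Y) :=
    fun h => by rw [List.prefix_iff_eq_take, List.take_left' h.symm]
  have hW : W <+: invRev U ++ invRev A ↔ invRev W <+: U ++ C := by
    rw [hprefix (by rw [invRev_length, hU]), hprefix (by rw [invRev_length, hU]),
      ← invRev_injective.eq_iff, invRev_invRev]
  simp only [occurrenceTerm, invRev_append, List.append_assoc]
  rw [List.drop_left' invRev_length, List.take_left' invRev_length, List.drop_left' rfl,
    List.take_left' rfl]
  by_cases h : invRev W <+: U ++ C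
  · rw [if_pos (hW.mpr h), if_pos h]
    obtain rfl : invRev W = U := (hprefix (by rw [invRev_length, hU])).mp h
    rw [← map_mul_apply, ← map_mul_apply, ← mul_mk, ← mul_mk, ← inv_mk, ← inv_mk]
    congr 2
    group
  · rw [if_neg (mt hW.mp h), if_neg h, map_zero]

theorem occurrenceSum_invRev (L : List (α × Bool)) :
    occurrenceSum ρ W v (invRev L) =
      ρ (mk L)⁻¹ (occurrenceSum ρ (invRev W) (ρ (mk W)⁻¹ v) L) := by
  rw [occurrenceSum_eq_sum_range_sub, occurrenceSum_eq_sum_range_sub, invRev_length, invRev_length,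
    map_sum, ← sum_range_reflect]
  refine sum_congr rfl fun n hn => ?_
  rw [mem_range] at hn
  obtain ⟨A, U, C, rfl, rfl, hU⟩ : ∃ A U C, L = A ++ U ++ C ∧ A.length = n ∧ U.length = W.length :=
    ⟨L.take n, (L.drop n).take W.length, L.drop (n + W.length), by simp [List.append_assoc],
      by simp; omega, by simp; omega⟩
  convert occurrenceTerm_invRev_append ρ W v A U C hU using 2
  simp only [List.length_append] at hn ⊢
  omega

end Occurrences

section BrooksSum

variable {α : Type*} [DecidableEq α] {E : Type*} [NormedAddCommGroup E] [NormedSpace ℝ E]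
  (ρ : FreeGroup α →* (E ≃ₗᵢ[ℝ] E)) (w : FreeGroup α) (e : E)

-- An occurrence of `w⁻¹` right after the prefix `h'` accounts for the element `h = h' w⁻¹` of
-- `w₋`, whose weight is `ρ h e = ρ h' (ρ w⁻¹ e)`.
def brooksSum (L : List (α × Bool)) : E :=
  occurrenceSum ρ w.toWord e L - occurrenceSum ρ w⁻¹.toWord (ρ w⁻¹ e) L

theorem norm_brooksSum_append_sub_le (A B : List (α × Bool)) :
    ‖brooksSum ρ w e (A ++ B) - brooksSum ρ w e A - ρ (mk A) (brooksSum ρ w e B)‖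
      ≤ 2 * ((2 * w.norm + 1) * ‖e‖) := by
  have hsplit : brooksSum ρ w e (A ++ B) - brooksSum ρ w e A - ρ (mk A) (brooksSum ρ w e B)
      = (occurrenceSum ρ w.toWord e (A ++ B) - occurrenceSum ρ w.toWord e A
          - ρ (mk A) (occurrenceSum ρ w.toWord e B))
        - (occurrenceSum ρ w⁻¹.toWord (ρ w⁻¹ e) (A ++ B) - occurrenceSum ρ w⁻¹.toWord (ρ w⁻¹ e) A
          - ρ (mk A) (occurrenceSum ρ w⁻¹.toWord (ρ w⁻¹ e) B)) := by
    simp only [brooksSum, map_sub]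
    abel
  have hinv := norm_occurrenceSum_append_sub_le ρ w⁻¹.toWord (ρ w⁻¹ e) A B
  rw [LinearIsometryEquiv.norm_map, show w⁻¹.toWord.length = w.norm from norm_inv_eq] at hinv
  rw [hsplit, two_mul]
  exact (norm_sub_le _ _).trans (add_le_add (norm_occurrenceSum_append_sub_le ρ _ e A B) hinv)

theorem brooksSum_invRev (L : List (α × Bool)) :
    brooksSum ρ w e (invRev L) = -ρ (mk L)⁻¹ (brooksSum ρ w e L) := by
  rw [brooksSum, brooksSum, occurrenceSum_invRev, occurrenceSum_invRev, ← toWord_inv, ← toWord_inv,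
    mk_toWord, mk_toWord, inv_inv, ← map_mul_apply, mul_inv_cancel, _root_.map_one,
    LinearIsometryEquiv.coe_one, id, map_sub, neg_sub]

theorem norm_brooksSum_mul_sub_le (g g' : FreeGroup α) :
    ‖brooksSum ρ w e (g * g').toWord - brooksSum ρ w e g.toWord - ρ g (brooksSum ρ w e g'.toWord)‖
      ≤ 3 * (2 * ((2 * w.norm + 1) * ‖e‖)) := by
  obtain ⟨P, C, Q, hg, hg', hgg'⟩ := exists_reduce_append_eq (isReduced_toWord (x := g))
    (isReduced_toWord (x := g'))
  have hcancel : ∀ x, ρ g (ρ (mk C)⁻¹ x) = ρ (mk P) x := fun x => by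
    rw [← map_mul_apply, ← mk_toWord (x := g), hg, ← mul_mk, mul_inv_cancel_right]
  set D := fun A B => brooksSum ρ w e (A ++ B) - brooksSum ρ w e A - ρ (mk A) (brooksSum ρ w e B)
  have key : brooksSum ρ w e (g * g').toWord - brooksSum ρ w e g.toWord
      - ρ g (brooksSum ρ w e g'.toWord) = D P Q - D P C - ρ g (D (invRev C) Q) := by
    rw [toWord_mul, hgg', hg, hg']
    simp only [D, map_sub, map_neg, brooksSum_invRev, ← inv_mk, hcancel]
    abel
  have hD : ∀ A B, ‖D A B‖ ≤ 2 * ((2 * w.norm + 1) * ‖e‖) := norm_brooksSum_append_sub_le ρ w e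
  calc _ = ‖D P Q - D P C - ρ g (D (invRev C) Q)‖ := by rw [key]
    _ ≤ ‖D P Q‖ + ‖D P C‖ + ‖D (invRev C) Q‖ := by
      refine (norm_sub_le _ _).trans ?_
      rw [LinearIsometryEquiv.norm_map]
      gcongr
      exact norm_sub_le _ _
    _ ≤ _ := by linarith [hD P Q, hD P C, hD (invRev C) Q]

end BrooksSum

section WPlus

theorem wlen_eq_norm : wlen = FreeGroup.norm := rfl

theorem mem_wplus_iff {w g h : FreeGroup (Fin 2)} :
    h ∈ wplus w g ↔ h.toWord ++ w.toWord <+: g.toWord := by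
  simp only [wplus, Set.mem_ofPred_eq, wlen_eq_norm, norm_add_norm_inv_mul_eq_iff_prefix]
  constructor
  · rintro ⟨hlen, -, hhw⟩
    rwa [← toWord_mul_of_length_eq hlen]
  · intro hp
    have hhw := toWord_mul_of_isReduced (isReduced_toWord.infix hp.isInfix)
    refine ⟨by rw [FreeGroup.norm, hhw, List.length_append]; rfl,
      (List.prefix_append _ _).trans hp, hhw ▸ hp⟩

theorem wminus_eq_image (w g : FreeGroup (Fin 2)) : wminus w g = (· * w⁻¹) '' wplus w⁻¹ g := by
  rw [Set.image_mul_right, inv_inv]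
  ext h
  simp only [wminus, wplus, Set.mem_ofPred_eq, Set.mem_preimage, mul_inv_cancel_right, wlen_eq_norm,
    norm_inv_eq]
  tauto

theorem bijOn_wplus (w g : FreeGroup (Fin 2)) :
    Set.BijOn (fun n => mk (g.toWord.take n))
      ↑((range (g.toWord.length + 1)).filter fun n => w.toWord <+: g.toWord.drop n)
      (wplus w g) := by
  have htake : ∀ n, (mk (g.toWord.take n)).toWord = g.toWord.take n := fun n => by
    rw [toWord_mk, (isReduced_toWord.infix (List.take_prefix n _).isInfix).reduce_eq]
  refine ⟨fun n hn => ?_, fun n hn m hm hnm => ?_, fun h hh => ?_⟩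
  · simp only [coe_filter, mem_range, Set.mem_ofPred_eq] at hn
    show mk (g.toWord.take n) ∈ wplus w g
    rw [mem_wplus_iff, htake]
    simpa using (List.prefix_append_right_inj (g.toWord.take n)).mpr hn.2
  · simp only [coe_filter, mem_range, Set.mem_ofPred_eq] at hn hm
    have := congrArg (List.length ∘ toWord) hnm
    simp only [Function.comp_apply, htake, List.length_take] at this
    omega
  · obtain ⟨R, hR⟩ := mem_wplus_iff.mp hh
    refine ⟨h.toWord.length, ?_, ?_⟩
    · simp [← hR]
    · simp [← hR, mk_toWord]

theorem wplus_finite (w g : FreeGroup (Fin 2)) : (wplus w g).Finite :=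
  (bijOn_wplus w g).image_eq ▸ (finite_toSet _).image _

theorem wminus_finite (w g : FreeGroup (Fin 2)) : (wminus w g).Finite :=
  wminus_eq_image w g ▸ (wplus_finite w⁻¹ g).image _

variable {E : Type*} [NormedAddCommGroup E] [NormedSpace ℝ E]
  (ρ : FreeGroup (Fin 2) →* (E ≃ₗᵢ[ℝ] E))

theorem finsum_wplus (w g : FreeGroup (Fin 2)) (v : E) :
    ∑ᶠ h ∈ wplus w g, ρ h v = occurrenceSum ρ w.toWord v g.toWord := by
  rw [← finsum_mem_eq_of_bijOn _ (bijOn_wplus w g) fun _ _ => rfl, finsum_mem_coe_finset,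
    sum_filter]
  rfl

theorem brooksEta_eq_brooksSum (w : FreeGroup (Fin 2)) (e : E) (g : FreeGroup (Fin 2)) :
    brooksEta ρ w e g = brooksSum ρ w e g.toWord := by
  simp only [brooksEta, brooksSum, wminus_eq_image, finsum_mem_image (mul_left_injective _).injOn,
    map_mul_apply, finsum_wplus]

end WPlus

theorem brooksEta_quasicocycle_general {E : Type*} [NormedAddCommGroup E] [NormedSpace ℝ E]
    (ρ : FreeGroup (Fin 2) → (E ≃ₗᵢ[ℝ] E))
    (hρmul : ∀ (g h : FreeGroup (Fin 2)) (x : E), ρ (g * h) x = ρ g (ρ h x))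
    (w : FreeGroup (Fin 2)) (e : E) :
    (∀ g : FreeGroup (Fin 2), (wplus w g).Finite ∧ (wminus w g).Finite) ∧
    (∃ C : ℝ, ∀ g g' : FreeGroup (Fin 2),
      ‖brooksEta ρ w e (g * g') - brooksEta ρ w e g - ρ g (brooksEta ρ w e g')‖ ≤ C) ∧
    (∀ g : FreeGroup (Fin 2),
      brooksEta ρ w e g⁻¹ = - (ρ g⁻¹ (brooksEta ρ w e g))) := by
  let σ : FreeGroup (Fin 2) →* (E ≃ₗᵢ[ℝ] E) :=
    MonoidHom.mk' ρ fun g h => LinearIsometryEquiv.ext (hρmul g h)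
  have hη : ∀ g, brooksEta ρ w e g = brooksSum σ w e g.toWord := brooksEta_eq_brooksSum σ w e
  refine ⟨fun g => ⟨wplus_finite w g, wminus_finite w g⟩,
    ⟨3 * (2 * ((2 * w.norm + 1) * ‖e‖)), fun g g' => ?_⟩, fun g => ?_⟩
  · rw [hη, hη, hη]
    exact norm_brooksSum_mul_sub_le σ w e g g'
  · rw [hη, hη, toWord_inv, brooksSum_invRev, mk_toWord]
    rfl

/-- For a nontrivial `w ∈ F₂`, a representation `ρ` of `F₂` by linear isometries of a normed
space `E` and a vector `e ∈ E`, the sets `w₊(g)` and `w₋(g)` are finite, and the map `η` is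
an anti-symmetric quasi-cocycle for `ρ`. -/
theorem brooksEta_quasicocycle {E : Type*} [NormedAddCommGroup E] [NormedSpace ℝ E]
    (ρ : FreeGroup (Fin 2) → (E ≃ₗᵢ[ℝ] E))
    (hρ1 : ∀ x : E, ρ 1 x = x)
    (hρmul : ∀ (g h : FreeGroup (Fin 2)) (x : E), ρ (g * h) x = ρ g (ρ h x))
    (w : FreeGroup (Fin 2)) (hw : w ≠ 1) (e : E) :
    (∀ g : FreeGroup (Fin 2), (wplus w g).Finite ∧ (wminus w g).Finite) ∧
    (∃ C : ℝ, ∀ g g' : FreeGroup (Fin 2),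
      ‖brooksEta ρ w e (g * g') - brooksEta ρ w e g - ρ g (brooksEta ρ w e g')‖ ≤ C) ∧
    (∀ g : FreeGroup (Fin 2),
      brooksEta ρ w e g⁻¹ = - (ρ g⁻¹ (brooksEta ρ w e g))) :=
  brooksEta_quasicocycle_general ρ hρmul w e
end

section
/- Fix an integer k ≥ 1 and define θ : ℕ → [0,∞) by θ(t) = t/(1 + log₊^{∘k}(t)). Then: (i) θ is non-decreasing; (ii) θ(t) → ∞ as t → ∞; (iii) θ is sub-additive, i.e. θ(s+t) ≤ θ(s) + θ(t) for all s,t ∈ ℕ; and (iv) there exists Θ : ℕ → [0,∞) with ∑_{j∈ℕ} Θ(j) < ∞ such that θ(t) ≤ ∑_{i=1}^{t} ∑_{j=i}^{∞} Θ(j) for every t ∈ ℕ. -/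
open Classical in
/-- `log₊^{∘k}(x)`: the `k`-fold composition of `log` applied to `x` when each intermediate
value is defined and the result is positive, and `0` otherwise. -/
noncomputable def logPlusIter (k : ℕ) (x : ℝ) : ℝ :=
  if ∀ j ≤ k, 0 < Real.log^[j] x then Real.log^[k] x else 0

/-- `θ(t) = t / (1 + log₊^{∘k}(t))`. -/
noncomputable def thetaLog (k : ℕ) (t : ℕ) : ℝ := (t : ℝ) / (1 + logPlusIter k t)


-- 1 < log^[j] x when log^[j+1] x > 0
lemma one_lt_logIter {x : ℝ} {j : ℕ} (h0 : 0 < Real.log^[j] x)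
    (h1 : 0 < Real.log^[j+1] x) : 1 < Real.log^[j] x := by
  by_contra hle
  push_neg at hle
  rw [Function.iterate_succ_apply'] at h1
  exact absurd (Real.log_nonpos h0.le hle) (not_le.2 h1)

-- iterates decrease (at a point where all are positive)
lemma logIter_anti {y : ℝ} {m : ℕ} (hy : ∀ i ≤ m, 0 < Real.log^[i] y) :
    ∀ i j, i ≤ j → j ≤ m → Real.log^[j] y ≤ Real.log^[i] y := by
  intro i j hij hjm
  induction j with
  | zero => simp_all
  | succ n ih =>
    rcases Nat.eq_or_lt_of_le hij with h | h
    · rw [h]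
    · have hn : n ≤ m := le_of_lt (Nat.lt_of_succ_le hjm)
      refine le_trans ?_ (ih (Nat.lt_succ_iff.mp h) hn)
      rw [Function.iterate_succ_apply']
      have := Real.log_le_sub_one_of_pos (hy n hn)
      linarith

lemma logIter_le_logIter {m : ℕ} {x y : ℝ} (hx : ∀ i ≤ m, 0 < Real.log^[i] x)
    (hxy : x ≤ y) : ∀ j ≤ m, Real.log^[j] x ≤ Real.log^[j] y := by
  intro j hj
  induction j with
  | zero => simpa using hxy
  | succ n ih =>
    rw [Function.iterate_succ_apply', Function.iterate_succ_apply']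
    exact Real.log_le_log (hx n (le_of_lt (Nat.lt_of_succ_le hj)))
      (ih (le_of_lt (Nat.lt_of_succ_le hj)))

-- difference chain: log^[j] y - log^[j] x ≤ log y - log x
lemma logIter_diff_le {m : ℕ} {x y : ℝ} (hx : ∀ i ≤ m, 0 < Real.log^[i] x)
    (hxy : x ≤ y) : ∀ j, 1 ≤ j → j ≤ m →
    Real.log^[j] y - Real.log^[j] x ≤ Real.log y - Real.log x := by
  intro j hj1 hjm
  induction j with
  | zero => omega
  | succ n ih =>
    rcases Nat.eq_or_lt_of_le hj1 with h | h
    · simp [← h]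
    · have hn1 : 1 ≤ n := Nat.lt_succ_iff.mp h
      have hnm : n ≤ m := le_of_lt (Nat.lt_of_succ_le hjm)
      refine le_trans ?_ (ih hn1 hnm)
      -- log b - log a ≤ b - a with a ≥ 1
      set a := Real.log^[n] x with ha
      set b := Real.log^[n] y with hb
      have hapos : 0 < a := hx n hnm
      have ha1 : 1 < a := one_lt_logIter hapos (hx (n+1) hjm)
      have hab : a ≤ b := logIter_le_logIter hx hxy n hnm
      have hbpos : 0 < b := lt_of_lt_of_le hapos hab
      rw [Function.iterate_succ_apply', Function.iterate_succ_apply', ← ha, ← hb]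
      have h1 : Real.log b - Real.log a = Real.log (b / a) := (Real.log_div hbpos.ne' hapos.ne').symm
      have h2 : Real.log (b / a) ≤ b / a - 1 := Real.log_le_sub_one_of_pos (by positivity)
      have h3 : b / a - 1 = (b - a) / a := by field_simp
      have h4 : (b - a) / a ≤ b - a := by
        rw [div_le_iff₀ hapos]
        nlinarith
      linarith

lemma logPlusIter_nonneg (k : ℕ) (x : ℝ) : 0 ≤ logPlusIter k x := by
  unfold logPlusIter; split
  · exact le_of_lt (‹∀ j ≤ k, 0 < Real.log^[j] x› k le_rfl)
  · exact le_rfl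

lemma logPlusIter_mono (k : ℕ) : Monotone (logPlusIter k) := by
  intro x y hxy
  unfold logPlusIter
  by_cases hx : ∀ j ≤ k, 0 < Real.log^[j] x
  · have hy : ∀ j ≤ k, 0 < Real.log^[j] y := fun j hj =>
      lt_of_lt_of_le (hx j hj) (logIter_le_logIter hx hxy j hj)
    rw [if_pos hx, if_pos hy]
    exact logIter_le_logIter hx hxy k le_rfl
  · rw [if_neg hx]
    split
    · exact le_of_lt (‹∀ j ≤ k, 0 < Real.log^[j] y› k le_rfl)
    · exact le_rfl

-- key: under cond y, 0 < x ≤ y:  log^[k] y - logPlusIter k x ≤ log y - log x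
lemma key_diff {k : ℕ} (hk : 1 ≤ k) {x y : ℝ} (hy : ∀ j ≤ k, 0 < Real.log^[j] y)
    (hx0 : 0 < x) (hxy : x ≤ y) :
    Real.log^[k] y - logPlusIter k x ≤ Real.log y - Real.log x := by
  by_cases hx : ∀ j ≤ k, 0 < Real.log^[j] x
  · rw [logPlusIter, if_pos hx]
    have := logIter_diff_le hx hxy k hk le_rfl
    simpa using this
  · rw [logPlusIter, if_neg hx]
    push_neg at hx
    obtain ⟨j₀, hj₀k, hj₀⟩ := hx
    -- minimal j with ¬(0 < log^[j] x)
    have hex : ∃ j, ¬ 0 < Real.log^[j] x := ⟨j₀, not_lt.2 hj₀⟩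
    classical
    set m := Nat.find hex with hm
    have hmle : m ≤ j₀ := Nat.find_min' hex (not_lt.2 hj₀)
    have hmk : m ≤ k := le_trans hmle hj₀k
    have hmpos : 1 ≤ m := by
      rcases Nat.eq_zero_or_pos m with h | h
      · exfalso; have := Nat.find_spec hex; rw [← hm, h] at this; exact this hx0
      · exact h
    have hxpos : ∀ i, i < m → 0 < Real.log^[i] x := fun i hi => by
      by_contra hcon; exact absurd (Nat.find_min' hex hcon) (not_le.2 hi)
    have hmx : ¬ 0 < Real.log^[m] x := Nat.find_spec hex
    -- log^[k] y ≤ log^[m-1] y - log^[m-1] x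
    have hvk : Real.log^[k] y ≤ Real.log^[m-1] y - Real.log^[m-1] x := by
      have ham1 : m - 1 < m := Nat.sub_lt hmpos one_pos
      have hax : 0 < Real.log^[m-1] x := hxpos _ ham1
      have hax1 : Real.log^[m-1] x ≤ 1 := by
        by_contra hgt
        push_neg at hgt
        have : 0 < Real.log^[m] x := by
          have : m = (m-1) + 1 := by omega
          rw [this, Function.iterate_succ_apply']
          exact Real.log_pos hgt
        exact hmx this
      have hby : 0 < Real.log^[m-1] y := hy _ (le_trans (le_of_lt ham1) hmk)
      have hlogb : Real.log^[k] y ≤ Real.log (Real.log^[m-1] y) := by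
        have e : Real.log (Real.log^[m-1] y) = Real.log^[m] y := by
          conv_rhs => rw [show m = (m-1)+1 by omega]
          rw [Function.iterate_succ_apply']
        rw [e]
        exact logIter_anti hy m k hmk le_rfl
      have hexp : Real.exp (Real.log^[k] y) ≤ Real.log^[m-1] y := by
        calc Real.exp (Real.log^[k] y) ≤ Real.exp (Real.log (Real.log^[m-1] y)) :=
              Real.exp_le_exp.2 hlogb
          _ = Real.log^[m-1] y := Real.exp_log hby
      have := Real.add_one_le_exp (Real.log^[k] y)
      linarith
    rcases Nat.eq_or_lt_of_le hmpos with h1 | h1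
    · -- m = 1 : log x ≤ 0
      have hlx : Real.log x ≤ 0 := by
        have := hmx; rw [← h1] at this; simpa using not_lt.1 this
      have : Real.log^[k] y ≤ Real.log y := by
        have := logIter_anti hy 1 k hk le_rfl
        simpa using this
      linarith
    · -- m ≥ 2, use chain up to m-1
      have hx' : ∀ i ≤ m - 1, 0 < Real.log^[i] x := fun i hi => hxpos i (by omega)
      have := logIter_diff_le hx' hxy (m-1) (by omega) le_rfl
      linarith

lemma logPlusIter_le_log {k : ℕ} (hk : 1 ≤ k) {x : ℝ} (hx : 1 ≤ x) :
    logPlusIter k x ≤ Real.log x := by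
  unfold logPlusIter
  split
  · have := logIter_anti ‹∀ j ≤ k, 0 < Real.log^[j] x› 1 k hk le_rfl
    simpa using this
  · exact Real.log_nonneg hx

lemma thetaLog_mono {k : ℕ} (hk : 1 ≤ k) : Monotone (thetaLog k) := by
  intro s t hst
  unfold thetaLog
  have hs0 : (0:ℝ) ≤ s := Nat.cast_nonneg s
  have hst' : (s:ℝ) ≤ t := Nat.cast_le.2 hst
  have hds : (0:ℝ) < 1 + logPlusIter k s := by
    have := logPlusIter_nonneg k s; linarith
  have hdt : (0:ℝ) < 1 + logPlusIter k t := by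
    have := logPlusIter_nonneg k t; linarith
  by_cases hy : ∀ j ≤ k, 0 < Real.log^[j] (t:ℝ)
  · rcases eq_or_lt_of_le hs0 with h0 | h0
    · rw [← h0]
      have ht0 : (0:ℝ) ≤ t := Nat.cast_nonneg t
      simp only [zero_div]
      exact div_nonneg ht0 hdt.le
    · have hkey := key_diff hk hy h0 hst'
      have hLt : logPlusIter k (t:ℝ) = Real.log^[k] (t:ℝ) := by
        rw [logPlusIter, if_pos hy]
      set u := logPlusIter k (s:ℝ) with hu
      set v := Real.log^[k] (t:ℝ) with hv
      have huv : u ≤ v := by rw [← hLt]; exact logPlusIter_mono k hst'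
      have hu0 : 0 ≤ u := logPlusIter_nonneg k (s:ℝ)
      have ht0 : (0:ℝ) < t := lt_of_lt_of_le h0 hst'
      have h1 : (s:ℝ) * Real.exp (v - u) ≤ t := by
        have he : Real.exp (v - u) ≤ Real.exp (Real.log t - Real.log s) :=
          Real.exp_le_exp.2 (by linarith)
        have h2 : Real.exp (Real.log t - Real.log s) = (t:ℝ) / s := by
          rw [Real.exp_sub, Real.exp_log ht0, Real.exp_log h0]
        rw [h2] at he
        calc (s:ℝ) * Real.exp (v - u) ≤ s * ((t:ℝ)/s) :=
              mul_le_mul_of_nonneg_left he hs0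
          _ = t := by field_simp
      have hexp : 1 + (v - u) ≤ Real.exp (v - u) := by
        have := Real.add_one_le_exp (v - u); linarith
      rw [div_le_div_iff₀ hds (by exact hdt)]
      nlinarith [mul_le_mul_of_nonneg_right h1 (by linarith : (0:ℝ) ≤ 1 + u),
        mul_le_mul_of_nonneg_right hexp (le_of_lt h0),
        mul_nonneg (mul_nonneg hs0 hu0) (sub_nonneg.2 huv)]
  · have hx : ¬ ∀ j ≤ k, 0 < Real.log^[j] (s:ℝ) := fun hxs =>
      hy (fun j hj => lt_of_lt_of_le (hxs j hj) (logIter_le_logIter hxs hst' j hj))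
    rw [logPlusIter, logPlusIter, if_neg hx, if_neg hy]
    simpa using hst'

lemma thetaLog_nonneg (k t : ℕ) : 0 ≤ thetaLog k t := by
  unfold thetaLog
  have h := logPlusIter_nonneg k (t:ℝ)
  have ht : (0:ℝ) ≤ t := Nat.cast_nonneg t
  exact div_nonneg ht (by linarith)

lemma thetaLog_subadd (k : ℕ) (s t : ℕ) :
    thetaLog k (s + t) ≤ thetaLog k s + thetaLog k t := by
  unfold thetaLog
  have hds : (0:ℝ) < 1 + logPlusIter k s := by
    have := logPlusIter_nonneg k s; linarith
  have hdt : (0:ℝ) < 1 + logPlusIter k t := by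
    have := logPlusIter_nonneg k t; linarith
  have hcast : ((s + t : ℕ) : ℝ) = (s:ℝ) + t := by push_cast; ring
  rw [hcast, add_div]
  have hms : logPlusIter k (s:ℝ) ≤ logPlusIter k ((s:ℝ) + (t:ℝ)) :=
    logPlusIter_mono k (le_add_of_nonneg_right (Nat.cast_nonneg t))
  have hmt : logPlusIter k (t:ℝ) ≤ logPlusIter k ((s:ℝ) + (t:ℝ)) :=
    logPlusIter_mono k (le_add_of_nonneg_left (Nat.cast_nonneg s))
  gcongr

lemma thetaLog_tendsto {k : ℕ} (hk : 1 ≤ k) :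
    Filter.Tendsto (thetaLog k) Filter.atTop Filter.atTop := by
  have hsq : Filter.Tendsto (fun x : ℝ => Real.sqrt x) Filter.atTop Filter.atTop := by
    refine Filter.tendsto_atTop.2 fun b => ?_
    filter_upwards [Filter.eventually_ge_atTop (b^2)] with x hx
    calc b ≤ |b| := le_abs_self b
      _ = Real.sqrt (b^2) := (Real.sqrt_sq_eq_abs b).symm
      _ ≤ Real.sqrt x := Real.sqrt_le_sqrt hx
  have hlow : Filter.Tendsto (fun t : ℕ => Real.sqrt (t:ℝ) / 3) Filter.atTop Filter.atTop :=
    (hsq.comp tendsto_natCast_atTop_atTop).atTop_div_const (by norm_num)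
  refine Filter.tendsto_atTop_mono' _ ?_ hlow
  filter_upwards [Filter.eventually_ge_atTop 1] with t ht
  have ht1 : (1:ℝ) ≤ t := by exact_mod_cast ht
  have ht0 : (0:ℝ) ≤ t := by linarith
  have hsq1 : (1:ℝ) ≤ Real.sqrt t := by
    rw [show (1:ℝ) = Real.sqrt 1 by simp]
    exact Real.sqrt_le_sqrt ht1
  have hsqpos : (0:ℝ) < Real.sqrt t := by linarith
  have hL : logPlusIter k (t:ℝ) ≤ Real.log t := logPlusIter_le_log hk ht1
  have hlog : Real.log (t:ℝ) ≤ 2 * Real.sqrt t - 2 := by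
    have h1 : Real.log (Real.sqrt t) = Real.log t / 2 := Real.log_sqrt ht0
    have h2 : Real.log (Real.sqrt t) ≤ Real.sqrt t - 1 :=
      Real.log_le_sub_one_of_pos hsqpos
    linarith
  have hd : (0:ℝ) < 1 + logPlusIter k t := by
    have := logPlusIter_nonneg k t; linarith
  have hd3 : 1 + logPlusIter k (t:ℝ) ≤ 3 * Real.sqrt t := by linarith
  unfold thetaLog
  rw [div_le_div_iff₀ (by norm_num) hd]
  nlinarith [mul_le_mul_of_nonneg_left hd3 (Real.sqrt_nonneg (t:ℝ)),
    Real.mul_self_sqrt ht0]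

lemma logIter_tendsto (m : ℕ) : Filter.Tendsto (Real.log^[m]) Filter.atTop Filter.atTop := by
  induction m with
  | zero => simpa using Filter.tendsto_id
  | succ n ih => rw [Function.iterate_succ']; exact Real.tendsto_log_atTop.comp ih

lemma logPlusIter_tendstoNat (k : ℕ) :
    Filter.Tendsto (fun t : ℕ => logPlusIter k (t:ℝ)) Filter.atTop Filter.atTop := by
  have hev : ∀ᶠ x : ℝ in Filter.atTop, ∀ j ≤ k, 0 < Real.log^[j] x := by
    have h : ∀ᶠ x : ℝ in Filter.atTop, ∀ j ∈ Finset.range (k+1), 0 < Real.log^[j] x :=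
      (Filter.eventually_all_finset _).2 fun j _ => (logIter_tendsto j).eventually_gt_atTop 0
    filter_upwards [h] with x hx j hj
    exact hx j (Finset.mem_range.2 (Nat.lt_succ_of_le hj))
  have hcongr : ∀ᶠ x : ℝ in Filter.atTop, Real.log^[k] x = logPlusIter k x := by
    filter_upwards [hev] with x hx
    rw [logPlusIter, if_pos hx]
  have h1 : Filter.Tendsto (logPlusIter k) Filter.atTop Filter.atTop :=
    (logIter_tendsto k).congr' hcongr
  exact h1.comp tendsto_natCast_atTop_atTop


/-- For `k ≥ 1`, the function `θ(t) = t/(1 + log₊^{∘k}(t))` is non-decreasing, tends to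
infinity, is sub-additive, and is dominated by the double tail-sums of a summable
nonnegative function `Θ`. -/
theorem thetaLog_properties (k : ℕ) (hk : 1 ≤ k) :
    Monotone (thetaLog k) ∧
    Filter.Tendsto (thetaLog k) Filter.atTop Filter.atTop ∧
    (∀ s t : ℕ, thetaLog k (s + t) ≤ thetaLog k s + thetaLog k t) ∧
    (∃ Θ : ℕ → ℝ, (∀ j : ℕ, 0 ≤ Θ j) ∧ Summable Θ ∧
      ∀ t : ℕ, thetaLog k t ≤
        ∑ i ∈ Finset.Icc 1 t, ∑' j : ℕ, (if i ≤ j then Θ j else 0)) := by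
  refine ⟨thetaLog_mono hk, thetaLog_tendsto hk, thetaLog_subadd k, ?_⟩
  set g : ℕ → ℝ := fun i => (1 + logPlusIter k (i:ℝ))⁻¹ with hg
  have hdpos : ∀ i : ℕ, (0:ℝ) < 1 + logPlusIter k (i:ℝ) := fun i => by
    have := logPlusIter_nonneg k (i:ℝ); linarith
  have hgpos : ∀ i, 0 < g i := fun i => inv_pos.2 (hdpos i)
  have hganti : ∀ i j : ℕ, i ≤ j → g j ≤ g i := by
    intro i j hij
    have hmono := logPlusIter_mono k (show (i:ℝ) ≤ (j:ℝ) from Nat.cast_le.2 hij)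
    have h1 : (1:ℝ) + logPlusIter k (i:ℝ) ≤ 1 + logPlusIter k (j:ℝ) := by linarith
    exact inv_anti₀ (hdpos i) h1
  have hΘnn : ∀ j : ℕ, 0 ≤ g j - g (j+1) := fun j =>
    sub_nonneg.2 (hganti j (j+1) (Nat.le_succ j))
  have hg0 : Filter.Tendsto g Filter.atTop (nhds 0) := by
    have h : Filter.Tendsto (fun i : ℕ => 1 + logPlusIter k (i:ℝ)) Filter.atTop Filter.atTop :=
      Filter.tendsto_atTop_add_const_left _ 1 (logPlusIter_tendstoNat k)
    exact h.inv_tendsto_atTop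
  refine ⟨fun j => g j - g (j+1), hΘnn, ?_, ?_⟩
  · refine summable_of_sum_range_le (c := g 0) hΘnn fun n => ?_
    rw [Finset.sum_range_sub' g n]
    have := (hgpos n).le; linarith
  · intro t
    have htail : ∀ i : ℕ, ∑' j : ℕ, (if i ≤ j then g j - g (j+1) else 0) = g i := by
      intro i
      have hnn : ∀ j : ℕ, 0 ≤ (if i ≤ j then g j - g (j+1) else 0) := by
        intro j; split
        · exact hΘnn j
        · exact le_rfl
      have hs : HasSum (fun j : ℕ => if i ≤ j then g j - g (j+1) else 0) (g i) := by
        rw [hasSum_iff_tendsto_nat_of_nonneg hnn]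
        have hpart : ∀ n, i ≤ n →
            ∑ j ∈ Finset.range n, (if i ≤ j then g j - g (j+1) else 0) = g i - g n := by
          intro n hn
          induction n, hn using Nat.le_induction with
          | base =>
            rw [Finset.sum_eq_zero, sub_self]
            intro j hj
            rw [if_neg (by simpa using Finset.mem_range.1 hj)]
          | succ n hn ih =>
            rw [Finset.sum_range_succ, ih, if_pos hn]
            ring
        have hlim : Filter.Tendsto (fun n : ℕ => g i - g n) Filter.atTop (nhds (g i)) := by
          have h := Filter.Tendsto.sub (tendsto_const_nhds (x := g i) (α := ℕ)) hg0
          simpa using h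
        refine hlim.congr' ?_
        filter_upwards [Filter.eventually_ge_atTop i] with n hn
        exact (hpart n hn).symm
      exact hs.tsum_eq
    have hsum : (t:ℝ) * g t ≤ ∑ i ∈ Finset.Icc 1 t, g i := by
      have h1 : ∑ i ∈ Finset.Icc 1 t, g t ≤ ∑ i ∈ Finset.Icc 1 t, g i :=
        Finset.sum_le_sum fun i hi => hganti i t (Finset.mem_Icc.1 hi).2
      have h2 : ∑ i ∈ Finset.Icc 1 t, g t = (t:ℝ) * g t := by
        rw [Finset.sum_const, Nat.card_Icc, nsmul_eq_mul]
        norm_num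
      linarith
    calc thetaLog k t = (t:ℝ) * g t := by rw [thetaLog, div_eq_mul_inv]
      _ ≤ ∑ i ∈ Finset.Icc 1 t, g i := hsum
      _ = ∑ i ∈ Finset.Icc 1 t, ∑' j : ℕ, (if i ≤ j then g j - g (j+1) else 0) :=
        (Finset.sum_congr rfl fun i _ => (htail i).symm)
end

section
/- Let G be a topological group, Λ ≤ G a subgroup, and ν a Borel probability measure on the quotient space G/Λ that is invariant under the left-translation action of G. Let B be a real Banach space. Assume that for every L' ≥ 1, every representation σ of Λ on B uniformly bounded by L', and every cocycle β for σ, the set {β(λ) : λ ∈ Λ} is bounded. Then for every L ≥ 1, every representation π of G on B uniformly bounded by L, and every cocycle α for π such that the affine action (g,x) ↦ π(g)x + α(g) is continuous as a map G × B → B, the set {α(g) : g ∈ G} is bounded. (That is, if a lattice Λ in G has property (F̄_B) then G has property (F̄_B).) -/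
/-!
The cocycle `α` is continuous, so the images in `G ⧸ Λ` of the sublevel sets
`{g | ‖α g‖ < R}` are open and exhaust `G ⧸ Λ`; fix one, `V`, of measure `> 1/2`. For any `g`,
invariance of `ν` forces `V ∩ g⁻¹ • V ≠ ∅`, i.e. `g * h = k * l` with `‖α h‖, ‖α k‖ < R` and
`l ∈ Λ`. The cocycle identity then bounds `‖α g‖` in terms of `R`, `L` and the bound on `α` over
`Λ` provided by property `(F̄_B)` of `Λ`.
-/

open MeasureTheory Filter Topology Set

section Cocycle

variable {G B : Type*} [Mul G] [NormedAddCommGroup B] [NormedSpace ℝ B]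
  {π : G → B →L[ℝ] B} {α : G → B} {L : ℝ}

lemma norm_cocycle_le_of_mul_eq_mul (hα : ∀ g h, α (g * h) = α g + π g (α h))
    (hπ : ∀ g, ‖π g‖ ≤ L) {g h k l : G} (heq : g * h = k * l) :
    ‖α g‖ ≤ ‖α k‖ + L * ‖α l‖ + L * ‖α h‖ := by
  have hg : α g = α k + π k (α l) - π g (α h) := by
    rw [← hα, ← heq, hα, add_sub_cancel_right]
  calc ‖α g‖ ≤ ‖α k‖ + ‖π k (α l)‖ + ‖π g (α h)‖ := by
        rw [hg]; exact (norm_sub_le _ _).trans (by gcongr; exact norm_add_le _ _)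
    _ ≤ ‖α k‖ + L * ‖α l‖ + L * ‖α h‖ := by
        gcongr
        · exact (π k).le_of_opNorm_le (hπ k) _
        · exact (π g).le_of_opNorm_le (hπ g) _

end Cocycle

lemma continuous_of_continuous_affine {R G E : Type*} [Semiring R] [TopologicalSpace G]
    [TopologicalSpace E] [AddCommMonoid E] [Module R E] {π : G → E →L[R] E} {α : G → E}
    (hcont : Continuous fun p : G × E => π p.1 p.2 + α p.1) : Continuous α := by
  simpa [Function.comp_def] using hcont.comp (Continuous.prodMk_left (0 : E))

lemma exists_lt_measure_image_sublevel {X Y : Type*} [MeasurableSpace X] (μ : Measure X)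
    {p : Y → X} (hp : Function.Surjective p) (f : Y → ℝ) {c : ENNReal} (hc : c < μ univ) :
    ∃ R : ℝ, c < μ (p '' {y | f y < R}) := by
  have hmono : Monotone fun R : ℝ => p '' {y | f y < R} :=
    fun R R' hR => image_mono fun y hy => lt_of_lt_of_le hy hR
  have hcover : (⋃ R : ℝ, p '' {y | f y < R}) = univ := by
    refine eq_univ_of_forall fun x => ?_
    obtain ⟨y, rfl⟩ := hp x
    exact mem_iUnion.mpr ⟨f y + 1, y, lt_add_one (f y), rfl⟩
  have hlim := tendsto_measure_iUnion_atTop (μ := μ) hmono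
  rw [hcover] at hlim
  exact (hlim.eventually (lt_mem_nhds hc)).exists

lemma exists_mem_and_mem_of_measurePreserving {X : Type*} [MeasurableSpace X] {μ : Measure X}
    [IsProbabilityMeasure μ] {f : X → X} (hf : MeasurePreserving f μ μ) {s : Set X}
    (hs : MeasurableSet s) (hs_half : 1 / 2 < μ s) : ∃ x ∈ s, f x ∈ s := by
  have hlt : μ univ < μ s + μ (f ⁻¹' s) := by
    rw [hf.measure_preimage hs.nullMeasurableSet, measure_univ, ← ENNReal.add_halves 1]
    exact ENNReal.add_lt_add hs_half hs_half
  exact nonempty_inter_of_measure_lt_add μ (hf.measurable hs) (subset_univ _) (subset_univ _) hlt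

theorem lattice_FB_implies_ambient_FB_general {G : Type*} [Group G] [TopologicalSpace G]
    [IsTopologicalGroup G] (Λ : Subgroup G)
    [MeasurableSpace (G ⧸ Λ)] [BorelSpace (G ⧸ Λ)]
    (ν : Measure (G ⧸ Λ)) [IsProbabilityMeasure ν]
    (hν : ∀ g : G, Measure.map (fun x : G ⧸ Λ => g • x) ν = ν)
    {B : Type*} [NormedAddCommGroup B] [NormedSpace ℝ B]
    (hΛ : ∀ L' : ℝ, 1 ≤ L' →
      ∀ σ : ↥Λ → B →L[ℝ] B, σ 1 = 1 →
      (∀ l₁ l₂ : ↥Λ, σ (l₁ * l₂) = σ l₁ ∘L σ l₂) →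
      (∀ l : ↥Λ, ‖σ l‖ ≤ L') →
      ∀ β : ↥Λ → B, (∀ l₁ l₂ : ↥Λ, β (l₁ * l₂) = β l₁ + σ l₁ (β l₂)) →
      ∃ M : ℝ, ∀ l : ↥Λ, ‖β l‖ ≤ M) :
    ∀ L : ℝ, 1 ≤ L →
    ∀ π : G → B →L[ℝ] B, π 1 = 1 →
    (∀ g h : G, π (g * h) = π g ∘L π h) →
    (∀ g : G, ‖π g‖ ≤ L) →
    ∀ α : G → B, (∀ g h : G, α (g * h) = α g + π g (α h)) →
    Continuous (fun p : G × B => π p.1 p.2 + α p.1) →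
    ∃ M : ℝ, ∀ g : G, ‖α g‖ ≤ M := by
  intro L hL π hπ1 hπmul hπ α hα hcont
  obtain ⟨M, hM⟩ := hΛ L hL (fun l => π l) hπ1 (fun l₁ l₂ => hπmul l₁ l₂) (fun l => hπ l)
    (fun l => α l) (fun l₁ l₂ => hα l₁ l₂)
  obtain ⟨R, hR⟩ := exists_lt_measure_image_sublevel ν QuotientGroup.mk_surjective
    (fun g => ‖α g‖) (c := 1 / 2) (by simp)
  have hV : MeasurableSet ((QuotientGroup.mk : G → G ⧸ Λ) '' {g | ‖α g‖ < R}) :=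
    (QuotientGroup.isOpenMap_coe _ (isOpen_lt
      (continuous_of_continuous_affine hcont).norm continuous_const)).measurableSet
  refine ⟨R + L * M + L * R, fun g => ?_⟩
  have hg : MeasurePreserving (fun x : G ⧸ Λ => g • x) ν ν :=
    ⟨(continuous_const_smul g).measurable, hν g⟩
  obtain ⟨_, ⟨h, hh, rfl⟩, k, hk, hkgh⟩ := exists_mem_and_mem_of_measurePreserving hg hV hR
  have hl : k⁻¹ * (g * h) ∈ Λ := QuotientGroup.eq.mp hkgh
  calc ‖α g‖ ≤ ‖α k‖ + L * ‖α (k⁻¹ * (g * h))‖ + L * ‖α h‖ :=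
        norm_cocycle_le_of_mul_eq_mul hα hπ (mul_inv_cancel_left k _).symm
    _ ≤ R + L * M + L * R := by
        have hL0 : 0 ≤ L := zero_le_one.trans hL
        gcongr
        exacts [hk.le, hM ⟨_, hl⟩, hh.le]

/-- If `Λ` is a subgroup of a topological group `G` such that the quotient `G/Λ` carries a
`G`-invariant Borel probability measure, and every uniformly Lipschitz affine action of `Λ`
on a Banach space `B` has bounded orbits, then every continuous uniformly Lipschitz affine
action of `G` on `B` has bounded orbits; that is, if the lattice `Λ` has property `(F̄_B)`
then so does `G`. -/
theorem lattice_FB_implies_ambient_FB {G : Type*} [Group G] [TopologicalSpace G]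
    [IsTopologicalGroup G] (Λ : Subgroup G)
    [MeasurableSpace (G ⧸ Λ)] [BorelSpace (G ⧸ Λ)]
    (ν : Measure (G ⧸ Λ)) [IsProbabilityMeasure ν]
    (hν : ∀ g : G, Measure.map (fun x : G ⧸ Λ => g • x) ν = ν)
    {B : Type*} [NormedAddCommGroup B] [NormedSpace ℝ B] [CompleteSpace B]
    (hΛ : ∀ L' : ℝ, 1 ≤ L' →
      ∀ σ : ↥Λ → B →L[ℝ] B, σ 1 = 1 →
      (∀ l₁ l₂ : ↥Λ, σ (l₁ * l₂) = σ l₁ ∘L σ l₂) →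
      (∀ l : ↥Λ, ‖σ l‖ ≤ L') →
      ∀ β : ↥Λ → B, (∀ l₁ l₂ : ↥Λ, β (l₁ * l₂) = β l₁ + σ l₁ (β l₂)) →
      ∃ M : ℝ, ∀ l : ↥Λ, ‖β l‖ ≤ M) :
    ∀ L : ℝ, 1 ≤ L →
    ∀ π : G → B →L[ℝ] B, π 1 = 1 →
    (∀ g h : G, π (g * h) = π g ∘L π h) →
    (∀ g : G, ‖π g‖ ≤ L) →
    ∀ α : G → B, (∀ g h : G, α (g * h) = α g + π g (α h)) →
    Continuous (fun p : G × B => π p.1 p.2 + α p.1) →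
    ∃ M : ℝ, ∀ g : G, ‖α g‖ ≤ M :=
  lattice_FB_implies_ambient_FB_general Λ ν hν hΛ
end
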